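/- arXiv:1911.10533 — 4 statements merged into one kernel-verified Lean document; each statement's English description precedes it below -/
import Mathlib

section
/- Let a, b > 0 and Φ_0(z) := (2/(a^2+b^2)) * (z^2 + (b^2 - a^2)/2 + w(z)) where w is as in the setup. Then sqrt(Φ_0(z)) admits an expansion at infinity of the form sqrt(Φ_0(z)) = ± 2z/sqrt(a^2+b^2) + O(1), so that the logarithmic capacity of the cross Δ = [-a,a] ∪ [-ib,ib] equals sqrt(a^2+b^2)/2. -/
open Complex Set Asymptotics Bornology Filter Metric

lemma preconn_big (R : ℝ) (hR : 0 ≤ R) : IsPreconnected {z : ℂ | R < ‖z‖} := by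
  have himg : {z : ℂ | R < ‖z‖} =
      (fun p : ℝ × ℂ => p.1 • p.2) '' ((Ioi R) ×ˢ (sphere (0:ℂ) 1)) := by
    ext z
    constructor
    · intro hz
      have hz0 : z ≠ 0 := by
        intro h; simp [h] at hz; exact absurd hz (not_lt.2 hR)
      refine ⟨(‖z‖, ‖z‖⁻¹ • z), ⟨hz, ?_⟩, ?_⟩
      · simp [norm_smul, abs_of_pos (norm_pos_iff.2 hz0),
          inv_mul_cancel₀ (norm_ne_zero_iff.2 hz0)]
      · simp only
        rw [smul_smul, mul_inv_cancel₀ (norm_ne_zero_iff.2 hz0), one_smul]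
    · rintro ⟨⟨t, u⟩, ⟨ht, hu⟩, rfl⟩
      simp only [mem_sphere_iff_norm, sub_zero] at hu
      have ht' : R < t := ht
      simp only [mem_setOf_eq, norm_smul, hu, mul_one, Real.norm_eq_abs]
      calc R < t := ht'
        _ ≤ |t| := le_abs_self t
  rw [himg]
  have h1 : IsPreconnected ((Ioi R) ×ˢ (sphere (0:ℂ) 1)) :=
    isPreconnected_Ioi.prod (isPreconnected_sphere (by
      rw [Complex.rank_real_complex]; exact_mod_cast one_lt_two) 0 1)
  exact h1.image _ (continuous_fst.smul continuous_snd).continuousOn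

lemma cobounded_exists {p : ℂ → Prop} (h : ∀ᶠ z in cobounded ℂ, p z) :
    ∃ R : ℝ, ∀ z : ℂ, R ≤ ‖z‖ → p z := by
  rw [← comap_norm_atTop, eventually_comap] at h
  rcases eventually_atTop.1 h with ⟨R, hR⟩
  exact ⟨R, fun z hz => hR ‖z‖ hz z rfl⟩

lemma segment_norm_le (p : ℂ) {x : ℂ} (hx : x ∈ segment ℝ (-p) p) : ‖x‖ ≤ ‖p‖ := by
  rcases hx with ⟨u, v, hu, hv, huv, rfl⟩
  calc ‖u • (-p) + v • p‖ ≤ ‖u • (-p)‖ + ‖v • p‖ := norm_add_le _ _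
    _ = u * ‖p‖ + v * ‖p‖ := by
        rw [norm_smul, norm_smul, norm_neg, Real.norm_eq_abs, Real.norm_eq_abs,
          _root_.abs_of_nonneg hu, _root_.abs_of_nonneg hv]
    _ = ‖p‖ := by rw [← add_mul, huv, one_mul]

set_option maxHeartbeats 1000000 in
/-- With `Φ_0(z) = (2/(a²+b²))(z² + (b²-a²)/2 + w(z))`, any continuous square
root `φ` of `Φ_0` off the cross `Δ` satisfies `φ(z) = ± 2z/√(a²+b²) + O(1)` at infinity;
consequently the logarithmic capacity of `Δ` (the reciprocal of the modulus of the leading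
coefficient of this exterior map) equals `√(a²+b²)/2`. -/
theorem stmt1 (a b : ℝ) (ha : 0 < a) (hb : 0 < b)
    (Δ : Set ℂ) (hΔ : Δ = segment ℝ (-(a : ℂ)) (a : ℂ) ∪ segment ℝ (-((b : ℂ) * I)) ((b : ℂ) * I))
    (w : ℂ → ℂ)
    (hw_sq : ∀ z ∉ Δ, (w z) ^ 2 = (z ^ 2 - (a : ℂ) ^ 2) * (z ^ 2 + (b : ℂ) ^ 2))
    (hw_holo : DifferentiableOn ℂ w Δᶜ)
    (hw_norm : (fun z => w z - z ^ 2) =O[cobounded ℂ] (fun z => z))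
    (φ : ℂ → ℂ)
    (hφ_sq : ∀ z ∉ Δ, (φ z) ^ 2 =
      (2 / ((a : ℂ) ^ 2 + (b : ℂ) ^ 2)) * (z ^ 2 + ((b : ℂ) ^ 2 - (a : ℂ) ^ 2) / 2 + w z))
    (hφ_cont : ContinuousOn φ Δᶜ) :
    (∃ ε : ℂ, (ε = 1 ∨ ε = -1) ∧
      (fun z => φ z - ε * (2 * z / (Real.sqrt (a ^ 2 + b ^ 2) : ℂ)))
        =O[cobounded ℂ] (fun _ => (1 : ℂ))) ∧
    Real.sqrt (a ^ 2 + b ^ 2) / 2 = 1 / (2 / Real.sqrt (a ^ 2 + b ^ 2)) := by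
  constructor
  swap
  · rw [one_div_div]
  set c : ℝ := a ^ 2 + b ^ 2 with hc_def
  have hc : 0 < c := by positivity
  set s : ℝ := Real.sqrt c with hs_def
  have hs : 0 < s := Real.sqrt_pos.2 hc
  have hs2 : s ^ 2 = c := Real.sq_sqrt hc.le
  have hsC : (s : ℂ) ^ 2 = (a : ℂ) ^ 2 + (b : ℂ) ^ 2 := by
    rw [← Complex.ofReal_pow, hs2, hc_def]; push_cast; ring
  have hsCne : (s : ℂ) ≠ 0 := by exact_mod_cast hs.ne'
  have hCne : ((a : ℂ) ^ 2 + (b : ℂ) ^ 2) ≠ 0 := by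
    rw [← hsC]; exact pow_ne_zero _ hsCne
  -- Δ is bounded
  have hΔb : ∀ z ∈ Δ, ‖z‖ ≤ max a b := by
    intro z hz
    rw [hΔ] at hz
    rcases hz with h | h
    · refine (segment_norm_le _ h).trans ?_
      simp only [Complex.norm_real, Real.norm_eq_abs, _root_.abs_of_pos ha]
      exact le_max_left a b
    · refine (segment_norm_le _ h).trans ?_
      rw [norm_mul, Complex.norm_I, mul_one, Complex.norm_real, Real.norm_eq_abs,
        _root_.abs_of_pos hb]
      exact le_max_right a b
  have hnotΔ : ∀ᶠ z in cobounded ℂ, z ∉ Δ :=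
    (eventually_cobounded_le_norm (max a b + 1)).mono
      (fun z hz hmem => by have := hΔb z hmem; linarith)
  -- the big-O estimate for φ² - (2z/s)²
  have hone : (fun _ : ℂ => (1 : ℂ)) =O[cobounded ℂ] fun z => z := by
    rw [isBigO_iff]
    exact ⟨1, (eventually_cobounded_le_norm 1).mono fun z hz => by simpa using hz⟩
  have hd : (fun _ : ℂ => ((b : ℂ) ^ 2 - (a : ℂ) ^ 2) / 2) =O[cobounded ℂ] fun z => z :=
    (isBigO_const_const _ one_ne_zero _).trans hone
  have hbig := (hw_norm.add hd).const_mul_left (2 / ((a : ℂ) ^ 2 + (b : ℂ) ^ 2))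
  have heq : (fun z : ℂ => 2 / ((a : ℂ) ^ 2 + (b : ℂ) ^ 2) *
        ((w z - z ^ 2) + ((b : ℂ) ^ 2 - (a : ℂ) ^ 2) / 2))
      =ᶠ[cobounded ℂ] fun z => φ z ^ 2 - (2 * z / (s : ℂ)) ^ 2 := by
    refine hnotΔ.mono fun z hz => ?_
    show 2 / ((a : ℂ) ^ 2 + (b : ℂ) ^ 2) * ((w z - z ^ 2) + ((b : ℂ) ^ 2 - (a : ℂ) ^ 2) / 2)
      = φ z ^ 2 - (2 * z / (s : ℂ)) ^ 2
    rw [hφ_sq z hz, show (2 * z / (s : ℂ)) ^ 2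
        = 2 / ((a : ℂ) ^ 2 + (b : ℂ) ^ 2) * (2 * z ^ 2) from by
      rw [div_pow, hsC]; field_simp]
    ring
  have hO : (fun z => φ z ^ 2 - (2 * z / (s : ℂ)) ^ 2) =O[cobounded ℂ] fun z => z :=
    hbig.congr' heq EventuallyEq.rfl
  obtain ⟨C, hC, hCb⟩ := hO.exists_pos
  obtain ⟨R₀, hR₀⟩ := cobounded_exists (hCb.bound.and hnotΔ)
  set R : ℝ := max R₀ (max 1 (C * c)) with hR_def
  have hR1 : (1 : ℝ) ≤ R := le_trans (le_max_left _ _) (le_max_right _ _)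
  have hRCc : C * c ≤ R := le_trans (le_max_right _ _) (le_max_right _ _)
  have hR0' : (0 : ℝ) ≤ R := le_trans zero_le_one hR1
  set E : Set ℂ := {z : ℂ | R < ‖z‖} with hE_def
  -- basic facts about points of E
  have hEfacts : ∀ z ∈ E, 1 < ‖z‖ ∧ C * c < ‖z‖ ∧ z ≠ 0 ∧ z ∉ Δ ∧
      ‖φ z ^ 2 - (2 * z / (s : ℂ)) ^ 2‖ ≤ C * ‖z‖ := by
    intro z hz
    have hzR : R < ‖z‖ := hz
    have h1 : 1 < ‖z‖ := lt_of_le_of_lt hR1 hzR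
    have hz0 : z ≠ 0 := by
      intro h; rw [h] at h1; simp at h1; linarith
    have hR₀z : R₀ ≤ ‖z‖ := le_of_lt (lt_of_le_of_lt (le_max_left _ _) hzR)
    obtain ⟨hbd, hzΔ⟩ := hR₀ z hR₀z
    exact ⟨h1, lt_of_le_of_lt hRCc hzR, hz0, hzΔ, by simpa using hbd⟩
  set t : ℂ → ℂ := fun z => φ z * (s : ℂ) / (2 * z) with ht_def
  -- key estimate on t² - 1
  have ht2 : ∀ z ∈ E, ‖t z ^ 2 - 1‖ * (4 * ‖z‖ ^ 2) ≤ C * ‖z‖ * c ∧ ‖t z ^ 2 - 1‖ < 1 / 2 := by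
    intro z hz
    obtain ⟨h1, hCc, hz0, hzΔ, hbd⟩ := hEfacts z hz
    have hfact : t z ^ 2 - 1 = (φ z ^ 2 - (2 * z / (s : ℂ)) ^ 2) * ((s : ℂ) ^ 2 / (4 * z ^ 2)) := by
      simp only [ht_def]
      field_simp
      ring
    have hsn : ‖(s : ℂ)‖ = s := by
      rw [Complex.norm_real, Real.norm_eq_abs, _root_.abs_of_pos hs]
    have h4 : ‖(4 : ℂ)‖ = 4 := by norm_num
    have hnorm : ‖t z ^ 2 - 1‖ = ‖φ z ^ 2 - (2 * z / (s : ℂ)) ^ 2‖ * (c / (4 * ‖z‖ ^ 2)) := by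
      rw [hfact, norm_mul, norm_div, norm_pow, norm_mul, norm_pow, hsn, h4, hs2]
    have hN : (0 : ℝ) < ‖z‖ := lt_trans zero_lt_one h1
    constructor
    · rw [hnorm]
      have hX : (4 * ‖z‖ ^ 2 : ℝ) ≠ 0 := by positivity
      rw [mul_assoc, div_mul_cancel₀ _ hX]
      exact mul_le_mul_of_nonneg_right hbd hc.le
    · rw [hnorm]
      have hle : ‖φ z ^ 2 - (2 * z / (s : ℂ)) ^ 2‖ * (c / (4 * ‖z‖ ^ 2))
          ≤ (C * ‖z‖) * (c / (4 * ‖z‖ ^ 2)) :=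
        mul_le_mul_of_nonneg_right hbd (by positivity)
      refine lt_of_le_of_lt hle ?_
      rw [mul_div_assoc', div_lt_iff₀ (by positivity)]
      nlinarith [mul_lt_mul_of_pos_right hCc hN, sq_nonneg ‖z‖, hN]
  -- connectivity and the sign
  have hEconn : IsPreconnected E := preconn_big R hR0'
  have hEsub : E ⊆ Δᶜ := fun z hz => (hEfacts z hz).2.2.2.1
  have htcont : ContinuousOn t E := by
    refine ContinuousOn.div ((hφ_cont.mono hEsub).mul continuousOn_const) ?_ ?_
    · exact (continuous_const.mul continuous_id).continuousOn
    · intro z hz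
      have := (hEfacts z hz).2.2.1
      simp [this]
  have hcover : t '' E ⊆ ball (1 : ℂ) (1 / 2) ∪ ball (-1 : ℂ) (1 / 2) := by
    rintro _ ⟨z, hz, rfl⟩
    have h2 := (ht2 z hz).2
    by_contra hcon
    simp only [mem_union, mem_ball, dist_eq_norm, not_or, not_lt] at hcon
    obtain ⟨hA, hB⟩ := hcon
    rw [sub_neg_eq_add] at hB
    have hprod : ‖t z - 1‖ * ‖t z + 1‖ = ‖t z ^ 2 - 1‖ := by
      rw [← norm_mul]; ring_nf
    have hsum : (2 : ℝ) ≤ ‖t z + 1‖ + ‖t z - 1‖ := by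
      calc (2 : ℝ) = ‖((t z + 1) - (t z - 1) : ℂ)‖ := by norm_num
        _ ≤ ‖t z + 1‖ + ‖t z - 1‖ := norm_sub_le _ _
    nlinarith [norm_nonneg (t z - 1), norm_nonneg (t z + 1)]
  have hdisj : Disjoint (ball (1 : ℂ) (1 / 2)) (ball (-1 : ℂ) (1 / 2)) := by
    apply ball_disjoint_ball
    rw [dist_eq_norm]
    norm_num
  have himg : IsPreconnected (t '' E) := hEconn.image t htcont
  have hsub := himg.subset_or_subset isOpen_ball isOpen_ball hdisj hcover
  -- extract the sign ε
  obtain ⟨ε, hε1, hnear⟩ : ∃ ε : ℂ, (ε = 1 ∨ ε = -1) ∧ ∀ z ∈ E, ‖t z - ε‖ < 1 / 2 := by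
    rcases hsub with h | h
    · exact ⟨1, Or.inl rfl, fun z hz => by
        have := h (mem_image_of_mem t hz); rwa [mem_ball, dist_eq_norm] at this⟩
    · exact ⟨-1, Or.inr rfl, fun z hz => by
        have := h (mem_image_of_mem t hz); rwa [mem_ball, dist_eq_norm] at this⟩
  have hε2 : ε ^ 2 = 1 := by rcases hε1 with h | h <;> simp [h]
  refine ⟨ε, hε1, ?_⟩
  rw [isBigO_iff]
  refine ⟨C * c / s, (eventually_cobounded_le_norm (R + 1)).mono fun z hz => ?_⟩
  have hzE : z ∈ E := by
    simp only [hE_def, mem_setOf_eq]; linarith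
  obtain ⟨h1, hCc, hz0, hzΔ, hbd⟩ := hEfacts z hzE
  have hN : (0 : ℝ) < ‖z‖ := lt_trans zero_lt_one h1
  obtain ⟨hP4, _⟩ := ht2 z hzE
  have hA := hnear z hzE
  -- ‖t z + ε‖ ≥ 3/2
  have hBsum : (2 : ℝ) ≤ ‖t z + ε‖ + ‖t z - ε‖ := by
    have h2ε : ‖(2 : ℂ) * ε‖ = 2 := by
      rcases hε1 with h | h <;> simp [h]
    calc (2 : ℝ) = ‖((t z + ε) - (t z - ε) : ℂ)‖ := by
          rw [show ((t z + ε) - (t z - ε) : ℂ) = 2 * ε by ring, h2ε]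
      _ ≤ ‖t z + ε‖ + ‖t z - ε‖ := norm_sub_le _ _
  have hB : (3 / 2 : ℝ) ≤ ‖t z + ε‖ := by linarith
  have hprod : ‖t z - ε‖ * ‖t z + ε‖ = ‖t z ^ 2 - 1‖ := by
    rw [← norm_mul]
    congr 1
    rw [show (t z - ε) * (t z + ε) = t z ^ 2 - ε ^ 2 by ring, hε2]
  -- key numeric bound : ‖t z - ε‖ * (2 * ‖z‖) ≤ C * c
  have hPA : (3 / 2 : ℝ) * ‖t z - ε‖ ≤ ‖t z ^ 2 - 1‖ := by
    nlinarith [mul_le_mul_of_nonneg_left hB (norm_nonneg (t z - ε))]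
  have h5 : ‖t z ^ 2 - 1‖ * (4 * ‖z‖) ≤ C * c := by
    refine le_of_mul_le_mul_right ?_ hN
    linarith [hP4]
  have hAbound : ‖t z - ε‖ * (2 * ‖z‖) ≤ C * c := by
    linarith [mul_le_mul_of_nonneg_right hPA hN.le, h5, (mul_pos hC hc).le]
  -- rewrite φ z - ε * (2z/s)
  have hφt : φ z - ε * (2 * z / (s : ℂ)) = (t z - ε) * (2 * z / (s : ℂ)) := by
    simp only [ht_def]
    field_simp
  rw [hφt, norm_mul, norm_div, norm_mul, Complex.norm_real, Real.norm_eq_abs,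
    _root_.abs_of_pos hs]
  have h2 : ‖(2 : ℂ)‖ = 2 := by norm_num
  rw [h2, norm_one, mul_one, mul_div_assoc']
  rw [div_le_div_iff₀ (by positivity) (by positivity)]
  nlinarith [hAbound, hs]
end

section
/- Let T_n denote the n-th monic Chebyshev polynomial of the first kind, i.e. 2^n T_n(z) = (z + sqrt(z^2-1))^n + (z - sqrt(z^2-1))^n on [-1,1], orthogonal to x^j for j < n on (-1,1) with respect to the weight 1/sqrt(1-x^2). Then for every n and every k ∈ {0, 1, ..., 2n}, the polynomial z ↦ T_n(z^2) of degree 2n satisfies ∫_Δ s^k T_n(s^2) ρ(s) ds = 0, where Δ = [-1,1] ∪ [-i, i] and ρ(s) = 1/w_+(s) with w(z) = sqrt(z^4 - 1). Consequently the monic polynomials of minimal degree satisfying these orthogonality relations obey Q_{2n}(z) = Q_{2n+1}(z) = T_n(z^2). -/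
open Complex Polynomial intervalIntegral MeasureTheory Set

/-- The non-Hermitian orthogonality integral `∫_Δ f(s) ρ(s) ds` over the cross
`Δ = [-1,1] ∪ [-i,i]` (each arm oriented towards the origin) for the Chebyshev-type weight
`ρ = 1/w₊`, `w(z) = sqrt(z⁴-1)`: on the real arms `w₊ = -i√(1-x⁴)` and on the imaginary
arms `w₊ = i√(1-y⁴)`, so `ρ = i/√(1-x⁴)` resp. `ρ = -i/√(1-y⁴)`. -/
noncomputable def crossIntCheb (f : ℂ → ℂ) : ℂ :=
    -(∫ x in (0:ℝ)..1, f (x : ℂ) * (I / (Real.sqrt (1 - x ^ 4) : ℂ)))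
    + (∫ x in (-1:ℝ)..0, f (x : ℂ) * (I / (Real.sqrt (1 - x ^ 4) : ℂ)))
    + (-I * ∫ y in (0:ℝ)..1, f (I * (y : ℂ)) * (-I / (Real.sqrt (1 - y ^ 4) : ℂ)))
    + (I * ∫ y in (-1:ℝ)..0, f (I * (y : ℂ)) * (-I / (Real.sqrt (1 - y ^ 4) : ℂ)))

/-- `Q` satisfies the orthogonality relations `∫_Δ s^k Q(s) ρ(s) ds = 0`, `k < m`. -/
def OrthoCheb (m : ℕ) (Q : ℂ[X]) : Prop :=
  ∀ k < m, crossIntCheb (fun s => s ^ k * Q.eval s) = 0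


noncomputable def bnd (x : ℝ) : ℝ := (1 - x) ^ (-(1/2:ℝ)) + (1 + x) ^ (-(1/2:ℝ))

lemma bnd_int (a b : ℝ) : IntervalIntegrable bnd MeasureTheory.volume a b := by
  apply IntervalIntegrable.add
  · have h := (intervalIntegral.intervalIntegrable_rpow' (a := 1-a) (b := 1-b)
      (r := -(1/2:ℝ)) (by norm_num)).comp_sub_left 1
    simpa only [sub_sub_cancel] using h
  · have h := (intervalIntegral.intervalIntegrable_rpow' (a := a+1) (b := b+1)
      (r := -(1/2:ℝ)) (by norm_num)).comp_add_left 1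
    simpa only [add_sub_cancel_right] using h

lemma bnd_bound {x : ℝ} (hx : x ∈ Set.Ioo (-1:ℝ) 1) : (Real.sqrt (1 - x^2))⁻¹ ≤ bnd x := by
  obtain ⟨h1, h2⟩ := hx
  have ha : (0:ℝ) < 1 - x := by linarith
  have hb : (0:ℝ) < 1 + x := by linarith
  have hfac : 1 - x^2 = (1-x)*(1+x) := by ring
  have hsq : Real.sqrt (1 - x^2) = (1-x)^((1:ℝ)/2) * (1+x)^((1:ℝ)/2) := by
    rw [hfac, Real.sqrt_mul ha.le, Real.sqrt_eq_rpow, Real.sqrt_eq_rpow]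
  have hinv : (Real.sqrt (1 - x^2))⁻¹ = (1-x)^(-(1/2:ℝ)) * (1+x)^(-(1/2:ℝ)) := by
    rw [hsq, mul_inv, ← Real.rpow_neg ha.le, ← Real.rpow_neg hb.le]

  rw [hinv]
  unfold bnd
  rcases le_total 0 x with hx0 | hx0
  · have hle : (1+x)^(-(1/2:ℝ)) ≤ 1 := by
      apply Real.rpow_le_one_of_one_le_of_nonpos (by linarith) (by norm_num)
    have h1x : (0:ℝ) ≤ (1-x)^(-(1/2:ℝ)) := Real.rpow_nonneg ha.le _
    nlinarith [Real.rpow_nonneg hb.le (-(1/2:ℝ))]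
  · have hle : (1-x)^(-(1/2:ℝ)) ≤ 1 := by
      apply Real.rpow_le_one_of_one_le_of_nonpos (by linarith) (by norm_num)
    have h1x : (0:ℝ) ≤ (1+x)^(-(1/2:ℝ)) := Real.rpow_nonneg hb.le _
    nlinarith [Real.rpow_nonneg ha.le (-(1/2:ℝ))]

lemma int_c (f : ℝ → ℂ) (hf : Continuous f) (c : ℂ) (r : ℝ → ℝ) (hr : Continuous r)
    (hge : ∀ x ∈ Set.Icc (-1:ℝ) 1, 1 - x^2 ≤ r x) (a b : ℝ)
    (hab : Set.uIcc a b ⊆ Set.Icc (-1:ℝ) 1) :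
    IntervalIntegrable (fun x => f x * (c / (Real.sqrt (r x) : ℂ))) MeasureTheory.volume a b := by
  obtain ⟨C, hC⟩ := (isCompact_Icc (a := (-1:ℝ)) (b := (1:ℝ))).exists_bound_of_continuousOn (f := f) hf.continuousOn
  have hC0 : 0 ≤ C := le_trans (norm_nonneg _) (hC 0 (by norm_num))
  rw [intervalIntegrable_iff]
  apply MeasureTheory.Integrable.mono' (g := fun x => (C * ‖c‖) * bnd x)
  · have := (bnd_int a b).const_mul (C * ‖c‖)
    rw [intervalIntegrable_iff] at this
    exact this
  · apply Measurable.aestronglyMeasurable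
    apply hf.measurable.mul
    apply Measurable.const_mul
    have : Measurable fun x => ((Real.sqrt (r x))⁻¹ : ℝ) :=
      (Real.continuous_sqrt.comp hr).measurable.inv
    have hm : Measurable fun x => ((((Real.sqrt (r x))⁻¹ : ℝ)) : ℂ) :=
      Complex.measurable_ofReal.comp this
    simpa [div_eq_mul_inv, Complex.ofReal_inv] using hm
    -- goal was measurable (fun x => c / ↑(√(r x))) minus const_mul; adjust below if fails
  · have hmem : ∀ᵐ x ∂(MeasureTheory.volume.restrict (Set.uIoc a b)), x ∈ Set.uIoc a b :=
      MeasureTheory.ae_restrict_mem measurableSet_uIoc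
    have hnm : ∀ᵐ (x : ℝ) ∂MeasureTheory.volume, x ∉ ({-1, 1} : Set ℝ) := by
      have h0 : MeasureTheory.volume ({-1, 1} : Set ℝ) = 0 :=
        (Set.toFinite _).measure_zero _
      exact (MeasureTheory.measure_eq_zero_iff_ae_notMem).mp h0
    filter_upwards [hmem, MeasureTheory.ae_restrict_of_ae hnm] with x hx hx2
    have hxIcc : x ∈ Set.Icc (-1:ℝ) 1 := hab (Set.uIoc_subset_uIcc hx)
    have hxIoo : x ∈ Set.Ioo (-1:ℝ) 1 := by
      constructor
      · rcases lt_or_eq_of_le hxIcc.1 with h | h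
        · exact h
        · exact absurd (by simp [← h]) hx2
      · rcases lt_or_eq_of_le hxIcc.2 with h | h
        · exact h
        · exact absurd (by simp [h]) hx2
    have hpos : 0 < Real.sqrt (1 - x^2) := Real.sqrt_pos.mpr (by nlinarith [hxIoo.1, hxIoo.2])
    have hrpos : Real.sqrt (1 - x^2) ≤ Real.sqrt (r x) :=
      Real.sqrt_le_sqrt (hge x hxIcc)
    have hnorm : ‖f x * (c / (Real.sqrt (r x) : ℂ))‖
        = ‖f x‖ * ‖c‖ * (Real.sqrt (r x))⁻¹ := by
      rw [norm_mul, norm_div, Complex.norm_real, Real.norm_eq_abs,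
        _root_.abs_of_nonneg (Real.sqrt_nonneg _)]
      ring
    rw [hnorm]
    calc ‖f x‖ * ‖c‖ * (Real.sqrt (r x))⁻¹
        ≤ C * ‖c‖ * (Real.sqrt (1 - x^2))⁻¹ := by
          apply mul_le_mul
          · exact mul_le_mul_of_nonneg_right (hC x hxIcc) (norm_nonneg _)
          · exact inv_anti₀ hpos hrpos
          · positivity
          · positivity
      _ ≤ C * ‖c‖ * bnd x := by
          apply mul_le_mul_of_nonneg_left (bnd_bound hxIoo) (by positivity)

lemma int_r (f : ℝ → ℝ) (hf : Continuous f) (r : ℝ → ℝ) (hr : Continuous r)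
    (hge : ∀ x ∈ Set.Icc (-1:ℝ) 1, 1 - x^2 ≤ r x) (a b : ℝ)
    (hab : Set.uIcc a b ⊆ Set.Icc (-1:ℝ) 1) :
    IntervalIntegrable (fun x => f x * (Real.sqrt (r x))⁻¹) MeasureTheory.volume a b := by
  obtain ⟨C, hC⟩ := (isCompact_Icc (a := (-1:ℝ)) (b := (1:ℝ))).exists_bound_of_continuousOn (f := f) hf.continuousOn
  have hC0 : 0 ≤ C := le_trans (norm_nonneg _) (hC 0 (by norm_num))
  rw [intervalIntegrable_iff]
  apply MeasureTheory.Integrable.mono' (g := fun x => C * bnd x)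
  · have := (bnd_int a b).const_mul C
    rw [intervalIntegrable_iff] at this
    exact this
  · exact (hf.measurable.mul (Real.continuous_sqrt.comp hr).measurable.inv).aestronglyMeasurable
  · have hmem : ∀ᵐ x ∂(MeasureTheory.volume.restrict (Set.uIoc a b)), x ∈ Set.uIoc a b :=
      MeasureTheory.ae_restrict_mem measurableSet_uIoc
    have hnm : ∀ᵐ (x : ℝ) ∂MeasureTheory.volume, x ∉ ({-1, 1} : Set ℝ) := by
      have h0 : MeasureTheory.volume ({-1, 1} : Set ℝ) = 0 :=
        (Set.toFinite _).measure_zero _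
      exact (MeasureTheory.measure_eq_zero_iff_ae_notMem).mp h0
    filter_upwards [hmem, MeasureTheory.ae_restrict_of_ae hnm] with x hx hx2
    have hxIcc : x ∈ Set.Icc (-1:ℝ) 1 := hab (Set.uIoc_subset_uIcc hx)
    have hxIoo : x ∈ Set.Ioo (-1:ℝ) 1 := by
      constructor
      · rcases lt_or_eq_of_le hxIcc.1 with h | h
        · exact h
        · exact absurd (by simp [← h]) hx2
      · rcases lt_or_eq_of_le hxIcc.2 with h | h
        · exact h
        · exact absurd (by simp [h]) hx2
    have hpos : 0 < Real.sqrt (1 - x^2) := Real.sqrt_pos.mpr (by nlinarith [hxIoo.1, hxIoo.2])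
    have hrpos : Real.sqrt (1 - x^2) ≤ Real.sqrt (r x) :=
      Real.sqrt_le_sqrt (hge x hxIcc)
    have hnorm : ‖f x * (Real.sqrt (r x))⁻¹‖ ≤ ‖f x‖ * (Real.sqrt (r x))⁻¹ := by
      simp only [norm_mul, Real.norm_eq_abs]
      rw [_root_.abs_of_nonneg (inv_nonneg.mpr (Real.sqrt_nonneg _))]
    refine le_trans hnorm ?_
    calc ‖f x‖ * (Real.sqrt (r x))⁻¹
        ≤ C * (Real.sqrt (1 - x^2))⁻¹ := by
          apply mul_le_mul (hC x hxIcc) (inv_anti₀ hpos hrpos) (by positivity) hC0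
      _ ≤ C * bnd x := mul_le_mul_of_nonneg_left (bnd_bound hxIoo) hC0

lemma subst_lemma (R : ℂ[X]) (j : ℕ) :
    (∫ x in (0:ℝ)..1, (x:ℂ)^(2*j+1) * R.eval ((x:ℂ)^2) * (1 / (Real.sqrt (1 - x^4) : ℂ)))
      = (1/2 : ℂ) * ∫ u in (0:ℝ)..1, (u:ℂ)^j * R.eval (u:ℂ) * (1 / (Real.sqrt (1 - u^2) : ℂ)) := by
  set G : ℝ → ℂ := fun u => (u:ℂ)^j * R.eval (u:ℂ) * (1 / (Real.sqrt (1 - u^2) : ℂ)) with hG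
  set F : ℝ → ℂ := fun x => (x:ℂ)^(2*j+1) * R.eval ((x:ℂ)^2) * (1 / (Real.sqrt (1 - x^4) : ℂ))
    with hF
  have himg : (fun x : ℝ => x^2) '' Set.Ioo 0 1 = Set.Ioo 0 1 := by
    ext u
    constructor
    · rintro ⟨x, ⟨hx0, hx1⟩, rfl⟩
      refine ⟨?_, ?_⟩
      · show (0:ℝ) < x^2
        positivity
      · show x^2 < 1
        nlinarith
    · rintro ⟨hu0, hu1⟩
      refine ⟨Real.sqrt u, ⟨Real.sqrt_pos.mpr hu0, ?_⟩, Real.sq_sqrt hu0.le⟩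
      rw [show (1:ℝ) = Real.sqrt 1 by simp]
      exact Real.sqrt_lt_sqrt hu0.le hu1
  have hderiv : ∀ x ∈ Set.Ioo (0:ℝ) 1,
      HasDerivWithinAt (fun x : ℝ => x^2) (2*x) (Set.Ioo 0 1) x := by
    intro x _
    have := (hasDerivAt_pow 2 x).hasDerivWithinAt (s := Set.Ioo (0:ℝ) 1)
    simpa using this
  have hinj : Set.InjOn (fun x : ℝ => x^2) (Set.Ioo 0 1) := by
    intro p hp q hq h
    simp only at h
    have h2 : (p - q) * (p + q) = 0 := by ring_nf; nlinarith [h]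
    rcases mul_eq_zero.mp h2 with h3 | h3
    · linarith
    · nlinarith [hp.1, hq.1]
  have hkey := MeasureTheory.integral_image_eq_integral_abs_deriv_smul measurableSet_Ioo
    hderiv hinj G
  rw [himg] at hkey
  have hcong : ∫ x in Set.Ioo (0:ℝ) 1, |2*x| • G (x^2)
      = ∫ x in Set.Ioo (0:ℝ) 1, (2:ℂ) * F x := by
    apply MeasureTheory.setIntegral_congr_fun measurableSet_Ioo
    intro x hx
    have hx0 : (0:ℝ) < x := hx.1
    show |2*x| • G (x^2) = 2 * F x
    rw [abs_of_pos (by linarith)]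
    rw [hF]
    simp only
    rw [Complex.real_smul, hG]
    simp only
    push_cast
    have h4 : (1:ℝ) - (x^2)^2 = 1 - x^4 := by ring
    rw [h4]
    ring
  have hIoc1 : (∫ x in (0:ℝ)..1, F x) = ∫ x in Set.Ioo (0:ℝ) 1, F x := by
    rw [intervalIntegral.integral_of_le (by norm_num : (0:ℝ) ≤ 1),
      MeasureTheory.integral_Ioc_eq_integral_Ioo]
  have hIoc2 : (∫ u in (0:ℝ)..1, G u) = ∫ u in Set.Ioo (0:ℝ) 1, G u := by
    rw [intervalIntegral.integral_of_le (by norm_num : (0:ℝ) ≤ 1),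
      MeasureTheory.integral_Ioc_eq_integral_Ioo]
  rw [hIoc1, hIoc2, hkey, hcong, MeasureTheory.integral_const_mul]
  ring

lemma reflect_int (g : ℝ → ℂ) : (∫ x in (-1:ℝ)..0, g x) = ∫ x in (0:ℝ)..1, g (-x) := by
  rw [intervalIntegral.integral_comp_neg]
  norm_num

lemma arm_odd (g : ℝ → ℂ) (hodd : ∀ x, g (-x) = - g x) :
    (∫ x in (-1:ℝ)..0, g x) = - ∫ x in (0:ℝ)..1, g x := by
  rw [reflect_int g]
  simp only [hodd]
  exact intervalIntegral.integral_neg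

lemma arm_even (g : ℝ → ℂ) (heven : ∀ x, g (-x) = g x) :
    (∫ x in (-1:ℝ)..0, g x) = ∫ x in (0:ℝ)..1, g x := by
  rw [reflect_int g]
  simp only [heven]

lemma pull_const (F : ℝ → ℂ) (c : ℂ) (a b : ℝ) (r : ℝ → ℝ) :
    (∫ x in a..b, F x * (c / (Real.sqrt (r x) : ℂ)))
      = c * ∫ x in a..b, F x * (1 / (Real.sqrt (r x) : ℂ)) := by
  rw [← intervalIntegral.integral_const_mul]
  apply intervalIntegral.integral_congr
  intro x _
  ring


lemma int14 : ∀ x ∈ Set.Icc (-1:ℝ) 1, 1 - x^2 ≤ 1 - x^4 := by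
  intro x hx
  have h1 := hx.1; have h2 := hx.2
  have hx2 : x^2 ≤ 1 := by nlinarith
  nlinarith [mul_le_mul_of_nonneg_right hx2 (sq_nonneg x)]

lemma int12 : ∀ x ∈ Set.Icc (-1:ℝ) 1, 1 - x^2 ≤ 1 - x^2 := fun x _ => le_refl _

lemma uIcc01 : Set.uIcc (0:ℝ) 1 ⊆ Set.Icc (-1:ℝ) 1 := by
  rw [Set.uIcc_of_le (by norm_num : (0:ℝ) ≤ 1)]
  intro x hx; exact ⟨by linarith [hx.1], hx.2⟩

lemma uIccm10 : Set.uIcc (-1:ℝ) 0 ⊆ Set.Icc (-1:ℝ) 1 := by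
  rw [Set.uIcc_of_le (by norm_num : (-1:ℝ) ≤ 0)]
  intro x hx; exact ⟨hx.1, by linarith [hx.2]⟩

lemma uIccm11 : Set.uIcc (-1:ℝ) 1 ⊆ Set.Icc (-1:ℝ) 1 := by
  rw [Set.uIcc_of_le (by norm_num : (-1:ℝ) ≤ 1)]

/-- The key identity: the cross integral of `s^(2j+1) P(s²)` reduces to the Chebyshev
orthogonality integral on `[-1,1]`. -/
lemma key_lemma (P : ℂ[X]) (j : ℕ) :
    crossIntCheb (fun s => s ^ (2*j+1) * P.eval (s ^ 2))
      = -I * ∫ u in (-1:ℝ)..1, (u:ℂ)^j * P.eval (u:ℂ) * (1 / (Real.sqrt (1 - u^2) : ℂ)) := by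
  have hoddpow : ∀ t : ℂ, (-t)^(2*j+1) = -(t^(2*j+1)) := fun t => Odd.neg_pow ⟨j, by ring⟩ t
  rw [crossIntCheb]
  -- real arm reflection
  rw [arm_odd (fun x : ℝ => ((x:ℂ))^(2*j+1) * P.eval ((x:ℂ)^2) * (I / (Real.sqrt (1 - x^4) : ℂ)))
    (by
      intro x
      have h4 : ((-x:ℝ))^4 = x^4 := by ring
      rw [Complex.ofReal_neg, h4, hoddpow, neg_sq]
      ring)]
  -- imaginary arm reflection
  rw [arm_odd (fun y : ℝ => (I*(y:ℂ))^(2*j+1) * P.eval ((I*(y:ℂ))^2) * (-I / (Real.sqrt (1 - y^4) : ℂ)))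
    (by
      intro y
      have h4 : ((-y:ℝ))^4 = y^4 := by ring
      rw [Complex.ofReal_neg, h4, mul_neg, hoddpow, neg_sq]
      ring)]
  -- simplify imaginary arm integrand
  have hCint : (∫ y in (0:ℝ)..1, (I*(y:ℂ))^(2*j+1) * P.eval ((I*(y:ℂ))^2) * (-I / (Real.sqrt (1 - y^4) : ℂ)))
      = ((-1:ℂ))^j * ∫ y in (0:ℝ)..1, ((y:ℂ))^(2*j+1) * (P.comp (-X)).eval ((y:ℂ)^2) * (1 / (Real.sqrt (1 - y^4) : ℂ)) := by
    rw [← intervalIntegral.integral_const_mul]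
    apply intervalIntegral.integral_congr
    intro y _
    simp only [eval_comp, eval_neg, eval_X]
    have h1 : (I*(y:ℂ))^(2*j+1) = (-1:ℂ)^j * I * (y:ℂ)^(2*j+1) := by
      rw [mul_pow, pow_succ, pow_mul, Complex.I_sq]
    have h2 : (I*(y:ℂ))^2 = -((y:ℂ)^2) := by
      rw [mul_pow, Complex.I_sq]; ring
    rw [h1, h2]
    linear_combination ((-1 : ℂ) * (-1:ℂ)^j * ((y:ℂ))^(2*j+1) * eval (-((y:ℂ))^2) P /
      ((Real.sqrt (1-y^4) : ℝ):ℂ)) * Complex.I_mul_I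
  rw [hCint]
  -- pull I out of real arm
  rw [pull_const (fun x : ℝ => ((x:ℂ))^(2*j+1) * P.eval ((x:ℂ)^2)) I 0 1 (fun x => 1 - x^4)]
  -- substitute in both
  rw [subst_lemma P j, subst_lemma (P.comp (-X)) j]
  -- reflect the second integral to [-1,0]
  have hrefl : ((-1:ℂ))^j * ∫ u in (0:ℝ)..1, (u:ℂ)^j * (P.comp (-X)).eval (u:ℂ) * (1 / (Real.sqrt (1 - u^2) : ℂ))
      = ∫ u in (-1:ℝ)..0, (u:ℂ)^j * P.eval (u:ℂ) * (1 / (Real.sqrt (1 - u^2) : ℂ)) := by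
    rw [reflect_int (fun u : ℝ => (u:ℂ)^j * P.eval (u:ℂ) * (1 / (Real.sqrt (1 - u^2) : ℂ)))]
    rw [← intervalIntegral.integral_const_mul]
    apply intervalIntegral.integral_congr
    intro u _
    simp only [eval_comp, eval_neg, eval_X]
    have h2 : ((-u:ℝ))^2 = u^2 := by ring
    rw [Complex.ofReal_neg, h2, neg_pow]
    ring
  -- combine adjacent intervals
  have hadd : (∫ u in (-1:ℝ)..0, (u:ℂ)^j * P.eval (u:ℂ) * (1 / (Real.sqrt (1 - u^2) : ℂ)))
      + (∫ u in (0:ℝ)..1, (u:ℂ)^j * P.eval (u:ℂ) * (1 / (Real.sqrt (1 - u^2) : ℂ)))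
      = ∫ u in (-1:ℝ)..1, (u:ℂ)^j * P.eval (u:ℂ) * (1 / (Real.sqrt (1 - u^2) : ℂ)) := by
    apply intervalIntegral.integral_add_adjacent_intervals
    · have := int_c (fun u : ℝ => (u:ℂ)^j * P.eval (u:ℂ))
        ((Complex.continuous_ofReal.pow j).mul
          ((Polynomial.continuous P).comp Complex.continuous_ofReal)) 1
        (fun u => 1 - u^2) (by continuity) int12 (-1) 0 uIccm10
      simpa [mul_assoc] using this
    · have := int_c (fun u : ℝ => (u:ℂ)^j * P.eval (u:ℂ))
        ((Complex.continuous_ofReal.pow j).mul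
          ((Polynomial.continuous P).comp Complex.continuous_ofReal)) 1
        (fun u => 1 - u^2) (by continuity) int12 0 1 uIcc01
      simpa [mul_assoc] using this
  rw [← hadd, ← hrefl]
  ring

lemma even_lemma (P : ℂ[X]) (j : ℕ) :
    crossIntCheb (fun s => s ^ (2*j) * P.eval (s ^ 2)) = 0 := by
  have hevenpow : ∀ t : ℂ, (-t)^(2*j) = t^(2*j) := fun t => Even.neg_pow (even_two_mul j) t
  rw [crossIntCheb]
  rw [arm_even (fun x : ℝ => ((x:ℂ))^(2*j) * P.eval ((x:ℂ)^2) * (I / (Real.sqrt (1 - x^4) : ℂ)))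
    (by
      intro x
      have h4 : ((-x:ℝ))^4 = x^4 := by ring
      rw [Complex.ofReal_neg, h4, hevenpow, neg_sq])]
  rw [arm_even (fun y : ℝ => (I*(y:ℂ))^(2*j) * P.eval ((I*(y:ℂ))^2) * (-I / (Real.sqrt (1 - y^4) : ℂ)))
    (by
      intro y
      have h4 : ((-y:ℝ))^4 = y^4 := by ring
      rw [Complex.ofReal_neg, h4, mul_neg, hevenpow, neg_sq])]
  ring

lemma arm_intR (h : ℂ → ℂ) (hh : Continuous h) (c : ℂ) (a b : ℝ)
    (hab : Set.uIcc a b ⊆ Set.Icc (-1:ℝ) 1) :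
    IntervalIntegrable (fun x : ℝ => h (x:ℂ) * (c / (Real.sqrt (1 - x^4) : ℂ)))
      MeasureTheory.volume a b :=
  int_c _ (hh.comp Complex.continuous_ofReal) c _ (by continuity) int14 a b hab

lemma arm_intI (h : ℂ → ℂ) (hh : Continuous h) (c : ℂ) (a b : ℝ)
    (hab : Set.uIcc a b ⊆ Set.Icc (-1:ℝ) 1) :
    IntervalIntegrable (fun y : ℝ => h (I * (y:ℂ)) * (c / (Real.sqrt (1 - y^4) : ℂ)))
      MeasureTheory.volume a b :=
  int_c _ (hh.comp (continuous_const.mul Complex.continuous_ofReal)) c _ (by continuity)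
    int14 a b hab

lemma crossInt_sub (f g : ℂ → ℂ) (hf : Continuous f) (hg : Continuous g) :
    crossIntCheb (fun s => f s - g s) = crossIntCheb f - crossIntCheb g := by
  have h1 : (∫ x in (0:ℝ)..1, (f (x:ℂ) - g (x:ℂ)) * (I / (Real.sqrt (1 - x^4) : ℂ)))
      = (∫ x in (0:ℝ)..1, f (x:ℂ) * (I / (Real.sqrt (1 - x^4) : ℂ)))
        - ∫ x in (0:ℝ)..1, g (x:ℂ) * (I / (Real.sqrt (1 - x^4) : ℂ)) := by
    rw [← intervalIntegral.integral_sub (arm_intR f hf I 0 1 uIcc01) (arm_intR g hg I 0 1 uIcc01)]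
    apply intervalIntegral.integral_congr; intro x _; ring
  have h2 : (∫ x in (-1:ℝ)..0, (f (x:ℂ) - g (x:ℂ)) * (I / (Real.sqrt (1 - x^4) : ℂ)))
      = (∫ x in (-1:ℝ)..0, f (x:ℂ) * (I / (Real.sqrt (1 - x^4) : ℂ)))
        - ∫ x in (-1:ℝ)..0, g (x:ℂ) * (I / (Real.sqrt (1 - x^4) : ℂ)) := by
    rw [← intervalIntegral.integral_sub (arm_intR f hf I (-1) 0 uIccm10)
      (arm_intR g hg I (-1) 0 uIccm10)]
    apply intervalIntegral.integral_congr; intro x _; ring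
  have h3 : (∫ y in (0:ℝ)..1, (f (I*(y:ℂ)) - g (I*(y:ℂ))) * (-I / (Real.sqrt (1 - y^4) : ℂ)))
      = (∫ y in (0:ℝ)..1, f (I*(y:ℂ)) * (-I / (Real.sqrt (1 - y^4) : ℂ)))
        - ∫ y in (0:ℝ)..1, g (I*(y:ℂ)) * (-I / (Real.sqrt (1 - y^4) : ℂ)) := by
    rw [← intervalIntegral.integral_sub (arm_intI f hf (-I) 0 1 uIcc01)
      (arm_intI g hg (-I) 0 1 uIcc01)]
    apply intervalIntegral.integral_congr; intro y _; ring
  have h4 : (∫ y in (-1:ℝ)..0, (f (I*(y:ℂ)) - g (I*(y:ℂ))) * (-I / (Real.sqrt (1 - y^4) : ℂ)))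
      = (∫ y in (-1:ℝ)..0, f (I*(y:ℂ)) * (-I / (Real.sqrt (1 - y^4) : ℂ)))
        - ∫ y in (-1:ℝ)..0, g (I*(y:ℂ)) * (-I / (Real.sqrt (1 - y^4) : ℂ)) := by
    rw [← intervalIntegral.integral_sub (arm_intI f hf (-I) (-1) 0 uIccm10)
      (arm_intI g hg (-I) (-1) 0 uIccm10)]
    apply intervalIntegral.integral_congr; intro y _; ring
  rw [crossIntCheb, crossIntCheb, crossIntCheb, h1, h2, h3, h4]
  ring

lemma crossInt_add (f g : ℂ → ℂ) (hf : Continuous f) (hg : Continuous g) :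
    crossIntCheb (fun s => f s + g s) = crossIntCheb f + crossIntCheb g := by
  have h1 : (∫ x in (0:ℝ)..1, (f (x:ℂ) + g (x:ℂ)) * (I / (Real.sqrt (1 - x^4) : ℂ)))
      = (∫ x in (0:ℝ)..1, f (x:ℂ) * (I / (Real.sqrt (1 - x^4) : ℂ)))
        + ∫ x in (0:ℝ)..1, g (x:ℂ) * (I / (Real.sqrt (1 - x^4) : ℂ)) := by
    rw [← intervalIntegral.integral_add (arm_intR f hf I 0 1 uIcc01) (arm_intR g hg I 0 1 uIcc01)]
    apply intervalIntegral.integral_congr; intro x _; ring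
  have h2 : (∫ x in (-1:ℝ)..0, (f (x:ℂ) + g (x:ℂ)) * (I / (Real.sqrt (1 - x^4) : ℂ)))
      = (∫ x in (-1:ℝ)..0, f (x:ℂ) * (I / (Real.sqrt (1 - x^4) : ℂ)))
        + ∫ x in (-1:ℝ)..0, g (x:ℂ) * (I / (Real.sqrt (1 - x^4) : ℂ)) := by
    rw [← intervalIntegral.integral_add (arm_intR f hf I (-1) 0 uIccm10)
      (arm_intR g hg I (-1) 0 uIccm10)]
    apply intervalIntegral.integral_congr; intro x _; ring
  have h3 : (∫ y in (0:ℝ)..1, (f (I*(y:ℂ)) + g (I*(y:ℂ))) * (-I / (Real.sqrt (1 - y^4) : ℂ)))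
      = (∫ y in (0:ℝ)..1, f (I*(y:ℂ)) * (-I / (Real.sqrt (1 - y^4) : ℂ)))
        + ∫ y in (0:ℝ)..1, g (I*(y:ℂ)) * (-I / (Real.sqrt (1 - y^4) : ℂ)) := by
    rw [← intervalIntegral.integral_add (arm_intI f hf (-I) 0 1 uIcc01)
      (arm_intI g hg (-I) 0 1 uIcc01)]
    apply intervalIntegral.integral_congr; intro y _; ring
  have h4 : (∫ y in (-1:ℝ)..0, (f (I*(y:ℂ)) + g (I*(y:ℂ))) * (-I / (Real.sqrt (1 - y^4) : ℂ)))
      = (∫ y in (-1:ℝ)..0, f (I*(y:ℂ)) * (-I / (Real.sqrt (1 - y^4) : ℂ)))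
        + ∫ y in (-1:ℝ)..0, g (I*(y:ℂ)) * (-I / (Real.sqrt (1 - y^4) : ℂ)) := by
    rw [← intervalIntegral.integral_add (arm_intI f hf (-I) (-1) 0 uIccm10)
      (arm_intI g hg (-I) (-1) 0 uIccm10)]
    apply intervalIntegral.integral_congr; intro y _; ring
  rw [crossIntCheb, crossIntCheb, crossIntCheb, h1, h2, h3, h4]
  ring

lemma sum_split (m : ℕ) (g : ℕ → ℂ) :
    ∑ p ∈ Finset.range (2*m+1), g p
      = ∑ i ∈ Finset.range (m+1), g (2*i) + ∑ i ∈ Finset.range m, g (2*i+1) := by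
  induction m with
  | zero => simp
  | succ m ih =>
      have h1 : 2*(m+1)+1 = (2*m+1) + 1 + 1 := by ring
      rw [h1, Finset.sum_range_succ, Finset.sum_range_succ, ih,
        Finset.sum_range_succ (fun i => g (2*i)) (m+1),
        Finset.sum_range_succ (fun i => g (2*i+1)) m]
      have e2 : 2*(m+1) = 2*m+1+1 := by ring
      rw [e2]
      ring

noncomputable def evenP (D : ℂ[X]) (n : ℕ) : ℂ[X] :=
  ∑ i ∈ Finset.range (n+1), C (D.coeff (2*i)) * X^i

noncomputable def oddP (D : ℂ[X]) (n : ℕ) : ℂ[X] :=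
  ∑ i ∈ Finset.range n, C (D.coeff (2*i+1)) * X^i

lemma eval_split (D : ℂ[X]) (n : ℕ) (hD : D.natDegree < 2*n+1) (s : ℂ) :
    D.eval s = (evenP D n).eval (s^2) + s * (oddP D n).eval (s^2) := by
  rw [eval_eq_sum_range' hD s, sum_split n (fun p => D.coeff p * s^p)]
  simp only [evenP, oddP, eval_finset_sum, eval_mul, eval_C, eval_pow, eval_X]
  rw [Finset.mul_sum]
  congr 1
  · apply Finset.sum_congr rfl; intro i _; rw [← pow_mul]
  · apply Finset.sum_congr rfl; intro i _; rw [← pow_mul]; ring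

lemma deg_oddP (D : ℂ[X]) (n : ℕ) : (oddP D n).degree < n := by
  apply lt_of_le_of_lt (degree_sum_le _ _)
  refine (Finset.sup_lt_iff (by exact_mod_cast WithBot.bot_lt_coe n)).mpr ?_
  intro i hi
  refine lt_of_le_of_lt (degree_C_mul_X_pow_le _ _) ?_
  exact_mod_cast Finset.mem_range.mp hi

lemma deg_evenP (D : ℂ[X]) (n : ℕ) : (evenP D n).degree ≤ n := by
  apply le_trans (degree_sum_le _ _)
  rw [Finset.sup_le_iff]
  intro i hi
  refine le_trans (degree_C_mul_X_pow_le _ _) ?_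
  exact_mod_cast Nat.lt_succ_iff.mp (Finset.mem_range.mp hi)

lemma zero_of_ortho (F : ℂ[X]) (n : ℕ) (hdeg : F.degree < n)
    (h : ∀ j < n,
      (∫ u in (-1:ℝ)..1, (u:ℂ)^j * F.eval (u:ℂ) * (1 / (Real.sqrt (1 - u^2) : ℂ))) = 0) :
    F = 0 := by
  by_contra hF
  have hnd : F.natDegree < n := (natDegree_lt_iff_degree_lt hF).mpr hdeg
  -- the quadratic integral vanishes
  have hS : (∫ u in (-1:ℝ)..1,
      (starRingEnd ℂ) (F.eval (u:ℂ)) * F.eval (u:ℂ) * (1 / (Real.sqrt (1 - u^2) : ℂ))) = 0 := by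
    have hpt : ∀ u : ℝ, (starRingEnd ℂ) (F.eval (u:ℂ)) * F.eval (u:ℂ) * (1 / (Real.sqrt (1 - u^2) : ℂ))
        = ∑ j ∈ Finset.range n, (starRingEnd ℂ) (F.coeff j)
            * ((u:ℂ)^j * F.eval (u:ℂ) * (1 / (Real.sqrt (1 - u^2) : ℂ))) := by
      intro u
      conv_lhs => rw [show (starRingEnd ℂ) (F.eval (u:ℂ))
        = ∑ j ∈ Finset.range n, (starRingEnd ℂ) (F.coeff j) * (u:ℂ)^j by
          rw [eval_eq_sum_range' hnd (u:ℂ), map_sum]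
          apply Finset.sum_congr rfl; intro j _
          rw [map_mul, map_pow, Complex.conj_ofReal]]
      rw [Finset.sum_mul, Finset.sum_mul]
      apply Finset.sum_congr rfl; intro j _
      ring
    simp only [hpt]
    rw [intervalIntegral.integral_finset_sum]
    · apply Finset.sum_eq_zero; intro j hj
      rw [intervalIntegral.integral_const_mul, h j (Finset.mem_range.mp hj), mul_zero]
    · intro j _
      have := (int_c (fun u : ℝ => (u:ℂ)^j * F.eval (u:ℂ))
        ((Complex.continuous_ofReal.pow j).mul
          ((Polynomial.continuous F).comp Complex.continuous_ofReal)) 1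
        (fun u => 1 - u^2) (by continuity) int12 (-1) 1 uIccm11).const_mul
        ((starRingEnd ℂ) (F.coeff j))
      simpa [mul_assoc] using this
  -- pass to a real integral
  set g : ℝ → ℝ := fun u => Complex.normSq (F.eval (u:ℂ)) * (Real.sqrt (1 - u^2))⁻¹ with hgdef
  have hSg : (∫ u in (-1:ℝ)..1, g u) = 0 := by
    have hpt : ∀ u : ℝ, ((g u : ℝ) : ℂ)
        = (starRingEnd ℂ) (F.eval (u:ℂ)) * F.eval (u:ℂ) * (1 / (Real.sqrt (1 - u^2) : ℂ)) := by
      intro u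
      rw [hgdef]
      simp only
      push_cast
      rw [Complex.normSq_eq_conj_mul_self]
      ring
    have := intervalIntegral.integral_ofReal (f := g) (a := (-1:ℝ)) (b := 1)
      (μ := MeasureTheory.volume)
    rw [← Complex.ofReal_eq_zero, ← this]
    simp only [hpt]
    exact hS
  have hgi : IntervalIntegrable g MeasureTheory.volume (-1) 1 := by
    have := int_r (fun u : ℝ => Complex.normSq (F.eval (u:ℂ)))
      (Complex.continuous_normSq.comp ((Polynomial.continuous F).comp Complex.continuous_ofReal))
      (fun u => 1 - u^2) (by continuity) int12 (-1) 1 uIccm11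
    exact this
  have hgnn : 0 ≤ᵐ[MeasureTheory.volume.restrict (Set.Ioc (-1:ℝ) 1)] g := by
    apply Filter.Eventually.of_forall
    intro u
    apply mul_nonneg (Complex.normSq_nonneg _) (inv_nonneg.mpr (Real.sqrt_nonneg _))
  have hae := (intervalIntegral.integral_eq_zero_iff_of_le_of_nonneg_ae
    (by norm_num : (-1:ℝ) ≤ 1) hgnn hgi).mp hSg
  -- roots of F on ℝ form a null set
  have hroots : Set.Finite {u : ℝ | F.eval (u:ℂ) = 0} := by
    have hpre : {u : ℝ | F.eval (u:ℂ) = 0} = (fun u : ℝ => (u:ℂ)) ⁻¹' {z : ℂ | F.IsRoot z} := rfl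
    rw [hpre]
    exact Set.Finite.preimage Complex.ofReal_injective.injOn (Polynomial.finite_setOf_isRoot hF)
  have hnull : MeasureTheory.volume ({u : ℝ | F.eval (u:ℂ) = 0} : Set ℝ) = 0 :=
    Set.Finite.measure_zero hroots MeasureTheory.volume
  have h2' : ∀ᵐ (u : ℝ) ∂MeasureTheory.volume, F.eval (u:ℂ) ≠ 0 := by
    rw [MeasureTheory.ae_iff]
    simpa using hnull
  have h2 : ∀ᵐ (u : ℝ) ∂(MeasureTheory.volume.restrict (Set.Ioc (-1:ℝ) 1)), F.eval (u:ℂ) ≠ 0 :=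
    MeasureTheory.ae_restrict_of_ae h2'
  have h3 : ∀ᵐ u ∂(MeasureTheory.volume.restrict (Set.Ioc (-1:ℝ) 1)),
      u ∉ Set.Ioo (-1:ℝ) 1 := by
    filter_upwards [hae, h2] with u hu1 hu2
    intro hu
    apply hu2
    have hpos : 0 < Real.sqrt (1 - u^2) :=
      Real.sqrt_pos.mpr (by nlinarith [hu.1, hu.2])
    have hu1' : g u = 0 := hu1
    rcases mul_eq_zero.mp hu1' with h4 | h4
    · exact Complex.normSq_eq_zero.mp h4
    · exact absurd (inv_eq_zero.mp h4) (ne_of_gt hpos)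
  have h4 : MeasureTheory.volume.restrict (Set.Ioc (-1:ℝ) 1) (Set.Ioo (-1:ℝ) 1) = 0 :=
    MeasureTheory.measure_eq_zero_iff_ae_notMem.mpr h3
  have h5 : MeasureTheory.volume.restrict (Set.Ioc (-1:ℝ) 1) (Set.Ioo (-1:ℝ) 1)
      = MeasureTheory.volume (Set.Ioo (-1:ℝ) 1) := by
    rw [MeasureTheory.Measure.restrict_apply measurableSet_Ioo,
      Set.inter_eq_self_of_subset_left Set.Ioo_subset_Ioc_self]
  rw [h5, Real.volume_Ioo] at h4
  norm_num at h4


set_option maxHeartbeats 1000000 in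
/-- If `T` is the `n`-th monic Chebyshev polynomial of the first kind
(monic, degree `n`, orthogonal to `x^j`, `j < n`, on `(-1,1)` w.r.t. `1/√(1-x²)`), then
`T(z²)` is orthogonal on the cross `Δ = [-1,1] ∪ [-i,i]` with weight `ρ = 1/w₊` to all
powers `s^k`, `k ∈ {0,…,2n}`; consequently the monic polynomials of minimal degree
satisfying these relations obey `Q_{2n} = Q_{2n+1} = T(z²)`. -/
theorem stmt5 (n : ℕ) (T : ℂ[X]) (hT : T.Monic) (hTdeg : T.natDegree = n)
    (hTortho : ∀ j < n,
      (∫ x in (-1:ℝ)..1, (x : ℂ) ^ j * T.eval (x : ℂ) * (1 / (Real.sqrt (1 - x ^ 2) : ℂ))) = 0) :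
    (∀ k ≤ 2 * n, crossIntCheb (fun s => s ^ k * T.eval (s ^ 2)) = 0) ∧
    ∀ m ∈ ({2 * n, 2 * n + 1} : Set ℕ), ∀ Q : ℂ[X], Q.Monic → OrthoCheb m Q →
      (∀ P : ℂ[X], P.Monic → OrthoCheb m P → Q.natDegree ≤ P.natDegree) →
      Q = T.comp (X ^ 2) := by
  have hpart1 : ∀ k ≤ 2 * n, crossIntCheb (fun s => s ^ k * T.eval (s ^ 2)) = 0 := by
    intro k hk
    rcases Nat.even_or_odd k with he | ho
    · obtain ⟨j, hj⟩ := he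
      have hk2 : k = 2 * j := by omega
      rw [hk2]
      exact even_lemma T j
    · obtain ⟨j, rfl⟩ := ho
      rw [key_lemma T j, hTortho j (by omega), mul_zero]
  refine ⟨hpart1, ?_⟩
  intro m hm Q hQmon hQorth hQmin
  simp only [Set.mem_insert_iff, Set.mem_singleton_iff] at hm
  have hmge : 2*n ≤ m ∧ m ≤ 2*n+1 := by omega
  set TX2 := T.comp (X^2) with hTX2def
  have hTXmon : TX2.Monic := hT.comp (monic_X_pow 2) (by simp [natDegree_X_pow])
  have hTXdeg : TX2.natDegree = 2*n := by
    rw [hTX2def, natDegree_comp, natDegree_X_pow, hTdeg]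
    ring
  have hTXev : ∀ s : ℂ, TX2.eval s = T.eval (s^2) := by
    intro s; rw [hTX2def, eval_comp, eval_pow, eval_X]
  have hTXorth : OrthoCheb m TX2 := by
    intro k hk
    have h1 : (fun s : ℂ => s ^ k * TX2.eval s) = fun s => s ^ k * T.eval (s^2) :=
      funext fun s => by rw [hTXev]
    rw [h1]
    exact hpart1 k (by omega)
  have hQdeg : Q.natDegree ≤ 2*n := hTXdeg ▸ hQmin TX2 hTXmon hTXorth
  set D := TX2 - Q with hDdef
  have hDdeg : D.natDegree < 2*n+1 := by
    apply Nat.lt_succ_of_le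
    apply le_trans (natDegree_sub_le _ _)
    exact max_le (le_of_eq hTXdeg) hQdeg
  have hDorth : ∀ k < m, crossIntCheb (fun s => s ^ k * D.eval s) = 0 := by
    intro k hk
    have hfun : (fun s : ℂ => s ^ k * D.eval s)
        = fun s => (fun s : ℂ => s ^ k * TX2.eval s) s - (fun s : ℂ => s ^ k * Q.eval s) s := by
      funext s; rw [hDdef, eval_sub]; ring
    rw [hfun, crossInt_sub (fun s : ℂ => s ^ k * TX2.eval s) (fun s : ℂ => s ^ k * Q.eval s) ((continuous_pow k).mul (Polynomial.continuous TX2))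
      ((continuous_pow k).mul (Polynomial.continuous Q)), hTXorth k hk, hQorth k hk, sub_zero]
  set E := evenP D n with hEdef
  set O := oddP D n with hOdef
  have hsplit : ∀ s : ℂ, D.eval s = E.eval (s^2) + s * O.eval (s^2) := by
    intro s
    rw [hEdef, hOdef]
    exact eval_split D n hDdeg s
  have contE2 : ∀ p : ℕ, Continuous fun s : ℂ => s ^ p * E.eval (s^2) :=
    fun p => (continuous_pow p).mul ((Polynomial.continuous E).comp (continuous_pow 2))
  have contO2 : ∀ p : ℕ, Continuous fun s : ℂ => s ^ p * O.eval (s^2) :=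
    fun p => (continuous_pow p).mul ((Polynomial.continuous O).comp (continuous_pow 2))
  have hI : (-I : ℂ) ≠ 0 := by simpa using I_ne_zero
  have hOE : ∀ j < n,
      (∫ u in (-1:ℝ)..1, (u:ℂ)^j * E.eval (u:ℂ) * (1 / (Real.sqrt (1 - u^2) : ℂ))) = 0 := by
    intro j hj
    have h0 := hDorth (2*j+1) (by omega)
    have hfun : (fun s : ℂ => s ^ (2*j+1) * D.eval s)
        = fun s => (fun s : ℂ => s ^ (2*j+1) * E.eval (s^2)) s
            + (fun s : ℂ => s ^ (2*(j+1)) * O.eval (s^2)) s := by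
      funext s; rw [hsplit s]; ring
    rw [hfun, crossInt_add _ _ (contE2 _) (contO2 _), key_lemma E j, even_lemma O (j+1),
      add_zero] at h0
    exact (mul_eq_zero.mp h0).resolve_left hI
  have hOO : ∀ j < n,
      (∫ u in (-1:ℝ)..1, (u:ℂ)^j * O.eval (u:ℂ) * (1 / (Real.sqrt (1 - u^2) : ℂ))) = 0 := by
    intro j hj
    have h0 := hDorth (2*j) (by omega)
    have hfun : (fun s : ℂ => s ^ (2*j) * D.eval s)
        = fun s => (fun s : ℂ => s ^ (2*j) * E.eval (s^2)) s
            + (fun s : ℂ => s ^ (2*j+1) * O.eval (s^2)) s := by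
      funext s; rw [hsplit s]; ring
    rw [hfun, crossInt_add _ _ (contE2 _) (contO2 _), even_lemma E j, key_lemma O j,
      zero_add] at h0
    exact (mul_eq_zero.mp h0).resolve_left hI
  have hO0 : O = 0 := zero_of_ortho O n (deg_oddP D n) hOO
  set c := E.coeff n with hcdef
  set F := E - C c * T with hFdef2
  have hTcoeff : T.coeff n = 1 := by rw [← hTdeg]; exact hT.coeff_natDegree
  have hFdeg : F.degree < n := by
    rw [degree_lt_iff_coeff_zero]
    intro mm hmm
    rcases eq_or_lt_of_le hmm with h | h
    · rw [hFdef2, coeff_sub, coeff_C_mul, ← h, hTcoeff, mul_one, hcdef, sub_self]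
    · have hEc : E.coeff mm = 0 :=
        coeff_eq_zero_of_degree_lt (lt_of_le_of_lt (deg_evenP D n) (by exact_mod_cast h))
      have hTc : (C c * T).coeff mm = 0 := by
        rw [coeff_C_mul, coeff_eq_zero_of_degree_lt
          (by rw [degree_eq_natDegree hT.ne_zero, hTdeg]; exact_mod_cast h), mul_zero]
      rw [hFdef2, coeff_sub, hEc, hTc, sub_zero]
  have hForth : ∀ j < n,
      (∫ u in (-1:ℝ)..1, (u:ℂ)^j * F.eval (u:ℂ) * (1 / (Real.sqrt (1 - u^2) : ℂ))) = 0 := by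
    intro j hj
    have hfun : ∀ u : ℝ, (u:ℂ)^j * F.eval (u:ℂ) * (1 / (Real.sqrt (1 - u^2) : ℂ))
        = (u:ℂ)^j * E.eval (u:ℂ) * (1 / (Real.sqrt (1 - u^2) : ℂ))
          - c * ((u:ℂ)^j * T.eval (u:ℂ) * (1 / (Real.sqrt (1 - u^2) : ℂ))) := by
      intro u; rw [hFdef2]; simp only [eval_sub, eval_mul, eval_C]; ring
    have hIA : IntervalIntegrable
        (fun u : ℝ => (u:ℂ)^j * E.eval (u:ℂ) * (1 / (Real.sqrt (1 - u^2) : ℂ)))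
        MeasureTheory.volume (-1) 1 := by
      simpa using int_c (fun u : ℝ => (u:ℂ)^j * E.eval (u:ℂ))
        ((Complex.continuous_ofReal.pow j).mul
          ((Polynomial.continuous E).comp Complex.continuous_ofReal)) 1
        (fun u => 1 - u^2) (by continuity) int12 (-1) 1 uIccm11
    have hIB : IntervalIntegrable
        (fun u : ℝ => c * ((u:ℂ)^j * T.eval (u:ℂ) * (1 / (Real.sqrt (1 - u^2) : ℂ))))
        MeasureTheory.volume (-1) 1 := by
      apply IntervalIntegrable.const_mul
      simpa using int_c (fun u : ℝ => (u:ℂ)^j * T.eval (u:ℂ))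
        ((Complex.continuous_ofReal.pow j).mul
          ((Polynomial.continuous T).comp Complex.continuous_ofReal)) 1
        (fun u => 1 - u^2) (by continuity) int12 (-1) 1 uIccm11
    simp only [hfun]
    rw [intervalIntegral.integral_sub hIA hIB, intervalIntegral.integral_const_mul,
      hOE j hj, hTortho j hj, mul_zero, sub_zero]
  have hF0 : F = 0 := zero_of_ortho F n hFdeg hForth
  have hE : E = C c * T := sub_eq_zero.mp hF0
  have hQfun : ∀ s : ℂ, Q.eval s = (1 - c) * T.eval (s^2) := by
    intro s
    have h2 : D.eval s = c * T.eval (s^2) := by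
      rw [hsplit s, hO0, hE]
      simp only [eval_mul, eval_C, eval_zero]
      ring
    have h3 : Q.eval s = TX2.eval s - D.eval s := by rw [hDdef, eval_sub]; ring
    rw [h3, h2, hTXev s]; ring
  have hQpoly : Q = C (1-c) * TX2 := by
    apply Polynomial.funext
    intro s
    rw [hQfun s, eval_mul, eval_C, hTXev s]
  clear_value TX2 D E O c F
  by_cases hc : (1 - c : ℂ) = 0
  · exfalso
    rw [hc, Polynomial.C_0, zero_mul] at hQpoly
    exact hQmon.ne_zero hQpoly
  · have hlc : Q.leadingCoeff = 1 - c := by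
      rw [hQpoly, leadingCoeff_mul, leadingCoeff_C, hTXmon.leadingCoeff, mul_one]
    have h1c : (1:ℂ) - c = 1 := by rw [← hlc]; exact hQmon
    rw [hQpoly, h1c, map_one, one_mul]
end

section
/- Let L_n denote the n-th monic Legendre polynomial (monic, orthogonal to x^j for j < n on (-1,1) with respect to the constant weight). Let Δ = [-1,1] ∪ [-i,i] with each segment oriented toward the origin, and let ρ(s) = (-1)^i on the i-th segment Δ_i (i = 1: [0,1] part toward 0; i = 2: [0,i] part; i = 3: [-1,0] part; i = 4: [-i,0] part). Then ∫_Δ s^k L_n(s^2) ρ(s) ds = 0 for all k ∈ {0, 1, ..., 2n}, and consequently Q_{2n+1}(z) = Q_{2n}(z) = L_n(z^2). -/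
open Complex Polynomial intervalIntegral

/-- The orthogonality integral `∫_Δ f(s) ρ(s) ds` over the cross `Δ = [-1,1] ∪ [-i,i]`
(arms oriented towards the origin) for the Legendre-type weight `ρ ≡ (-1)^i` on `Δ_i`
(`Δ_1` from `1` to `0`, `Δ_2` from `i` to `0`, `Δ_3` from `-1` to `0`, `Δ_4` from `-i` to `0`). -/
noncomputable def crossIntLeg (f : ℂ → ℂ) : ℂ :=
    -(∫ x in (0:ℝ)..1, f (x : ℂ) * (-1 : ℂ))
    + (∫ x in (-1:ℝ)..0, f (x : ℂ) * (-1 : ℂ))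
    + (-I * ∫ y in (0:ℝ)..1, f (I * (y : ℂ)) * (1 : ℂ))
    + (I * ∫ y in (-1:ℝ)..0, f (I * (y : ℂ)) * (1 : ℂ))

/-- `Q` satisfies the orthogonality relations `∫_Δ s^k Q(s) ρ(s) ds = 0`, `k < m`. -/
def OrthoLeg (m : ℕ) (Q : ℂ[X]) : Prop :=
  ∀ k < m, crossIntLeg (fun s => s ^ k * Q.eval s) = 0

open MeasureTheory

noncomputable def cc (p : ℕ) : ℂ := (1 - (-1)^p) * (1 - I^(p+1)) / (p+1)
noncomputable def rr (q : ℕ) : ℂ := (1 + (-1)^q) / (q+1)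

lemma intpow_cast (a b : ℝ) (p : ℕ) :
    (∫ x in a..b, ((x:ℝ):ℂ)^p) = (((b^(p+1) - a^(p+1))/(p+1) : ℝ) : ℂ) := by
  simp_rw [← Complex.ofReal_pow]
  rw [intervalIntegral.integral_ofReal, integral_pow]

lemma intpow1 (p : ℕ) : (∫ x in (0:ℝ)..1, ((x:ℝ):ℂ)^p) = 1/((p:ℂ)+1) := by
  rw [intpow_cast]; push_cast; simp

lemma intpow2 (p : ℕ) : (∫ x in (-1:ℝ)..0, ((x:ℝ):ℂ)^p) = (-1)^p/((p:ℂ)+1) := by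
  rw [intpow_cast]; push_cast
  rw [zero_pow (Nat.succ_ne_zero p), pow_succ]
  have h := Nat.cast_add_one_ne_zero (R := ℂ) p
  field_simp
  ring

lemma intpow3 (q : ℕ) : (∫ x in (-1:ℝ)..1, ((x:ℝ):ℂ)^q) = rr q := by
  rw [intpow_cast, rr]; push_cast
  rw [one_pow, pow_succ]
  have h := Nat.cast_add_one_ne_zero (R := ℂ) q
  field_simp
  ring

lemma crossIntLeg_pow (p : ℕ) : crossIntLeg (fun s => s^p) = cc p := by
  have hne := Nat.cast_add_one_ne_zero (R := ℂ) p
  unfold crossIntLeg cc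
  simp only [mul_one, mul_neg_one, intervalIntegral.integral_neg, mul_pow]
  rw [intervalIntegral.integral_const_mul, intervalIntegral.integral_const_mul,
    intpow1, intpow2]
  rw [pow_succ]
  field_simp
  ring
lemma crossIntLeg_sum (d : ℕ) (a : ℕ → ℂ) (e : ℕ → ℕ) :
    crossIntLeg (fun s => ∑ p ∈ Finset.range d, a p * s ^ e p)
      = ∑ p ∈ Finset.range d, a p * cc (e p) := by
  have hcont : ∀ (p : ℕ) (g : ℝ → ℂ), Continuous g →
      ∀ (u v : ℝ), IntervalIntegrable (fun x : ℝ => a p * (g x) ^ e p * (-1:ℂ)) MeasureTheory.volume u v := by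
    intro p g hg u v
    exact ((continuous_const.mul (hg.pow _)).mul continuous_const).intervalIntegrable u v
  have hcont1 : ∀ (p : ℕ) (g : ℝ → ℂ), Continuous g →
      ∀ (u v : ℝ), IntervalIntegrable (fun x : ℝ => a p * (g x) ^ e p * (1:ℂ)) MeasureTheory.volume u v := by
    intro p g hg u v
    exact ((continuous_const.mul (hg.pow _)).mul continuous_const).intervalIntegrable u v
  unfold crossIntLeg
  simp only [Finset.sum_mul]
  rw [intervalIntegral.integral_finset_sum (fun p _ => hcont p _ continuous_ofReal 0 1),
    intervalIntegral.integral_finset_sum (fun p _ => hcont p _ continuous_ofReal (-1) 0),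
    intervalIntegral.integral_finset_sum
      (fun p _ => hcont1 p (fun y : ℝ => I * (y:ℂ)) (continuous_const.mul continuous_ofReal) 0 1),
    intervalIntegral.integral_finset_sum
      (fun p _ => hcont1 p (fun y : ℝ => I * (y:ℂ)) (continuous_const.mul continuous_ofReal) (-1) 0)]
  rw [← Finset.sum_neg_distrib, Finset.mul_sum, Finset.mul_sum,
    ← Finset.sum_add_distrib, ← Finset.sum_add_distrib, ← Finset.sum_add_distrib]
  refine Finset.sum_congr rfl fun p _ => ?_
  have h := crossIntLeg_pow (e p)
  unfold crossIntLeg at h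
  simp only [mul_assoc, intervalIntegral.integral_const_mul]
  rw [← h]
  ring
lemma cc_even (q : ℕ) : cc (2*q) = 0 := by
  unfold cc
  rw [pow_mul]
  norm_num

lemma cc_odd (q : ℕ) : cc (2*q+1) = rr q := by
  unfold cc rr
  have h1 : ((-1:ℂ))^(2*q+1) = -1 := by
    rw [pow_succ, pow_mul]; norm_num
  have h2 : (I:ℂ)^(2*q+1+1) = (-1)^(q+1) := by
    rw [show 2*q+1+1 = 2*(q+1) by ring, pow_mul, I_sq]
  rw [h1, h2]
  have hq := Nat.cast_add_one_ne_zero (R := ℂ) q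
  have hq2 : ((2*q+1:ℕ):ℂ) + 1 = 2*((q:ℂ)+1) := by push_cast; ring
  rw [hq2, pow_succ]
  field_simp
  ring

lemma crossIntLeg_poly (k d : ℕ) (P : ℂ[X]) (hd : P.natDegree < d) :
    crossIntLeg (fun s => s^k * P.eval s) = ∑ p ∈ Finset.range d, P.coeff p * cc (k+p) := by
  have hfun : (fun s : ℂ => s^k * P.eval s)
      = fun s => ∑ p ∈ Finset.range d, P.coeff p * s^(k+p) := by
    funext s
    rw [eval_eq_sum_range' hd, Finset.mul_sum]
    refine Finset.sum_congr rfl fun p _ => ?_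
    rw [pow_add]; ring
  rw [hfun, crossIntLeg_sum]

lemma int_poly (t d : ℕ) (P : ℂ[X]) (hd : P.natDegree < d) :
    (∫ x in (-1:ℝ)..1, ((x:ℝ):ℂ)^t * P.eval ((x:ℝ):ℂ))
      = ∑ p ∈ Finset.range d, P.coeff p * rr (t+p) := by
  have hfun : (fun x : ℝ => ((x:ℝ):ℂ)^t * P.eval ((x:ℝ):ℂ))
      = fun x : ℝ => ∑ p ∈ Finset.range d, P.coeff p * ((x:ℝ):ℂ)^(t+p) := by
    funext x
    rw [eval_eq_sum_range' hd, Finset.mul_sum]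
    refine Finset.sum_congr rfl fun p _ => ?_
    rw [pow_add]; ring
  rw [hfun, intervalIntegral.integral_finset_sum]
  · refine Finset.sum_congr rfl fun p _ => ?_
    rw [intervalIntegral.integral_const_mul, intpow3]
  · intro p _
    exact (continuous_const.mul (continuous_ofReal.pow _)).intervalIntegrable _ _

lemma sum_range_odd_split (f : ℕ → ℂ) (n : ℕ) :
    ∑ p ∈ Finset.range (2*n+1), f p
      = (∑ j ∈ Finset.range (n+1), f (2*j)) + ∑ j ∈ Finset.range n, f (2*j+1) := by
  induction n with
  | zero => simp
  | succ m ih =>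
    rw [show 2*(m+1)+1 = (2*m+1)+1+1 by ring]
    rw [Finset.sum_range_succ, Finset.sum_range_succ, ih]
    rw [Finset.sum_range_succ (fun j => f (2*j)) (m+1), Finset.sum_range_succ (fun j => f (2*j+1)) m]
    have e1 : 2*m+1+1 = 2*(m+1) := by ring
    rw [e1]
    ring

lemma kernel (N : ℕ) (P : ℂ[X]) (hdeg : P.degree < (N : WithBot ℕ))
    (h : ∀ t < N, (∫ x in (-1:ℝ)..1, ((x:ℝ):ℂ)^t * P.eval ((x:ℝ):ℂ)) = 0) : P = 0 := by
  by_contra hP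
  have hnd : P.natDegree < N := (Polynomial.natDegree_lt_iff_degree_lt hP).2 hdeg
  set Pc := P.map (starRingEnd ℂ) with hPcdef
  have hPc : Pc.natDegree = P.natDegree := natDegree_map (starRingEnd ℂ)
  have hPceval : ∀ x : ℝ, Pc.eval ((x:ℝ):ℂ) = (starRingEnd ℂ) (P.eval ((x:ℝ):ℂ)) := by
    intro x
    have h2 := Polynomial.eval₂_at_apply (p := P) (starRingEnd ℂ) ((x:ℝ):ℂ)
    rw [Complex.conj_ofReal] at h2
    rw [hPcdef, eval_map, h2]
  have hcontP : Continuous fun x : ℝ => P.eval ((x:ℝ):ℂ) :=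
    P.continuous.comp continuous_ofReal
  have key : (∫ x in (-1:ℝ)..1, Pc.eval ((x:ℝ):ℂ) * P.eval ((x:ℝ):ℂ)) = 0 := by
    have hfun : (fun x : ℝ => Pc.eval ((x:ℝ):ℂ) * P.eval ((x:ℝ):ℂ))
        = fun x : ℝ => ∑ t ∈ Finset.range N, Pc.coeff t * (((x:ℝ):ℂ)^t * P.eval ((x:ℝ):ℂ)) := by
      funext x
      rw [eval_eq_sum_range' (hPc ▸ hnd), Finset.sum_mul]
      refine Finset.sum_congr rfl fun t _ => ?_
      ring
    rw [hfun, intervalIntegral.integral_finset_sum]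
    · refine Finset.sum_eq_zero fun t ht => ?_
      rw [intervalIntegral.integral_const_mul, h t (Finset.mem_range.1 ht), mul_zero]
    · intro t _
      exact (continuous_const.mul ((continuous_ofReal.pow _).mul hcontP)).intervalIntegrable _ _
  -- turn into a real integral of normSq
  set g : ℝ → ℝ := fun x => Complex.normSq (P.eval ((x:ℝ):ℂ)) with hgdef
  have hgcont : Continuous g := Complex.continuous_normSq.comp hcontP
  have hgnonneg : ∀ x, 0 ≤ g x := fun x => Complex.normSq_nonneg _
  have key2 : (∫ x in (-1:ℝ)..1, g x) = 0 := by
    have : (∫ x in (-1:ℝ)..1, ((g x : ℝ) : ℂ)) = 0 := by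
      rw [← key]
      refine intervalIntegral.integral_congr fun x _ => ?_
      rw [hPceval, hgdef]
      simp only []
      rw [← Complex.normSq_eq_conj_mul_self]
    rw [intervalIntegral.integral_ofReal] at this
    exact_mod_cast this
  -- a.e. zero on Ioc
  have hint : IntegrableOn g (Set.Ioc (-1:ℝ) 1) volume := hgcont.integrableOn_Ioc
  have key3 : (∫ x in Set.Ioc (-1:ℝ) 1, g x) = 0 := by
    rw [← intervalIntegral.integral_of_le (by norm_num : (-1:ℝ) ≤ 1)]
    exact key2
  have hae : g =ᵐ[volume.restrict (Set.Ioc (-1:ℝ) 1)] 0 :=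
    (MeasureTheory.integral_eq_zero_iff_of_nonneg (fun x => hgnonneg x) hint).1 key3
  -- root set is finite
  have hroots : (Set.Finite {x : ℝ | P.eval ((x:ℝ):ℂ) = 0}) := by
    have hfin : Set.Finite {z : ℂ | P.IsRoot z} := Polynomial.finite_setOf_isRoot hP
    have : {x : ℝ | P.eval ((x:ℝ):ℂ) = 0} = (fun x : ℝ => ((x:ℝ):ℂ)) ⁻¹' {z : ℂ | P.IsRoot z} := rfl
    rw [this]
    exact Set.Finite.preimage (Set.injOn_of_injective Complex.ofReal_injective) hfin
  have hZzero : volume {x : ℝ | P.eval ((x:ℝ):ℂ) = 0} = 0 := hroots.measure_zero _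
  -- measure of the nonzero set
  have hne : MeasurableSet {x : ℝ | g x ≠ 0} :=
    (hgcont.measurable (measurableSet_singleton (0:ℝ)).compl : MeasurableSet (g ⁻¹' ({0}ᶜ)))
  have hmeas0 : volume ({x : ℝ | g x ≠ 0} ∩ Set.Ioc (-1:ℝ) 1) = 0 := by
    have h3 := MeasureTheory.ae_iff.1 hae
    simp only [Pi.zero_apply] at h3
    rwa [Measure.restrict_apply hne] at h3
  have hsub : Set.Ioc (-1:ℝ) 1 ⊆
      ({x : ℝ | g x ≠ 0} ∩ Set.Ioc (-1:ℝ) 1) ∪ {x : ℝ | P.eval ((x:ℝ):ℂ) = 0} := by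
    intro x hx
    by_cases hgx : g x = 0
    · right
      exact Complex.normSq_eq_zero.1 hgx
    · left; exact ⟨hgx, hx⟩
  have : volume (Set.Ioc (-1:ℝ) 1) = 0 := by
    refine le_antisymm ?_ zero_le
    calc volume (Set.Ioc (-1:ℝ) 1)
        ≤ volume (({x : ℝ | g x ≠ 0} ∩ Set.Ioc (-1:ℝ) 1) ∪ {x : ℝ | P.eval ((x:ℝ):ℂ) = 0}) :=
          measure_mono hsub
      _ ≤ volume ({x : ℝ | g x ≠ 0} ∩ Set.Ioc (-1:ℝ) 1) + volume {x : ℝ | P.eval ((x:ℝ):ℂ) = 0} :=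
          measure_union_le _ _
      _ = 0 := by rw [hmeas0, hZzero, add_zero]
  rw [Real.volume_Ioc] at this
  norm_num at this
lemma coeff_sum_C_mul_X (m : ℕ) (a : ℕ → ℂ) (q : ℕ) :
    (∑ j ∈ Finset.range m, C (a j) * X^j).coeff q = if q < m then a q else 0 := by
  rw [Polynomial.finset_sum_coeff]
  simp only [coeff_C_mul, coeff_X_pow, mul_ite, mul_one, mul_zero]
  rw [Finset.sum_ite_eq (Finset.range m) q a]
  simp [Finset.mem_range]

lemma comp_X_sq (L : ℂ[X]) (n : ℕ) (hLdeg : L.natDegree = n) :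
    L.comp (X^2) = ∑ j ∈ Finset.range (n+1), C (L.coeff j) * (X:ℂ[X])^(2*j) := by
  rw [comp_eq_sum_left]
  rw [Polynomial.sum_over_range' (n := n+1) _ (fun i => by simp) (by omega)]
  refine Finset.sum_congr rfl fun j _ => ?_
  rw [← pow_mul]

lemma comp_X_sq_coeff_even (L : ℂ[X]) (n : ℕ) (hLdeg : L.natDegree = n) (j : ℕ) :
    (L.comp (X^2)).coeff (2*j) = L.coeff j := by
  rw [comp_X_sq L n hLdeg, Polynomial.finset_sum_coeff]
  simp only [coeff_C_mul, coeff_X_pow, mul_ite, mul_one, mul_zero]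
  have hcond : ∀ j' : ℕ, (if (2*j : ℕ) = 2*j' then L.coeff j' else 0)
      = if j = j' then L.coeff j' else 0 := fun j' => if_congr (by omega) rfl rfl
  simp_rw [hcond]
  rw [Finset.sum_ite_eq (Finset.range (n+1)) j L.coeff]
  by_cases hj : j ∈ Finset.range (n+1)
  · simp [hj]
  · rw [if_neg hj]
    rw [Finset.mem_range] at hj
    exact (Polynomial.coeff_eq_zero_of_natDegree_lt (by omega)).symm

lemma comp_X_sq_coeff_odd (L : ℂ[X]) (n : ℕ) (hLdeg : L.natDegree = n) (j : ℕ) :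
    (L.comp (X^2)).coeff (2*j+1) = 0 := by
  rw [comp_X_sq L n hLdeg, Polynomial.finset_sum_coeff]
  simp only [coeff_C_mul, coeff_X_pow, mul_ite, mul_one, mul_zero]
  refine Finset.sum_eq_zero fun j' _ => ?_
  rw [if_neg (by omega)]

/-- If `L` is the `n`-th monic Legendre polynomial (monic, degree `n`,
orthogonal to `x^j`, `j < n`, on `(-1,1)` with constant weight), then
`∫_Δ s^k L(s²) ρ(s) ds = 0` for all `k ∈ {0,…,2n}`, and consequently
`Q_{2n} = Q_{2n+1} = L(z²)` for the monic minimal-degree orthogonal polynomials. -/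
theorem stmt6 (n : ℕ) (L : ℂ[X]) (hL : L.Monic) (hLdeg : L.natDegree = n)
    (hLortho : ∀ j < n, (∫ x in (-1:ℝ)..1, (x : ℂ) ^ j * L.eval (x : ℂ)) = 0) :
    (∀ k ≤ 2 * n, crossIntLeg (fun s => s ^ k * L.eval (s ^ 2)) = 0) ∧
    ∀ m ∈ ({2 * n, 2 * n + 1} : Set ℕ), ∀ Q : ℂ[X], Q.Monic → OrthoLeg m Q →
      (∀ P : ℂ[X], P.Monic → OrthoLeg m P → Q.natDegree ≤ P.natDegree) →
      Q = L.comp (X ^ 2) := by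
  set M : ℂ[X] := L.comp (X^2) with hMdef
  have hMco_even : ∀ j, M.coeff (2*j) = L.coeff j := comp_X_sq_coeff_even L n hLdeg
  have hMco_odd : ∀ j, M.coeff (2*j+1) = 0 := comp_X_sq_coeff_odd L n hLdeg
  have hMdeg : M.natDegree = 2*n := by
    rw [hMdef, natDegree_comp, hLdeg, natDegree_X_pow]; ring
  have hMmonic : M.Monic := hL.comp (monic_X_pow 2) (by simp [natDegree_X_pow])
  have hMeval : ∀ s : ℂ, M.eval s = L.eval (s^2) := by
    intro s; rw [hMdef, eval_comp, eval_pow, eval_X]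
  -- Part 1
  have part1 : ∀ k ≤ 2*n, crossIntLeg (fun s => s ^ k * L.eval (s ^ 2)) = 0 := by
    intro k hk
    have hfun : (fun s : ℂ => s ^ k * L.eval (s ^ 2)) = fun s => s ^ k * M.eval s := by
      funext s; rw [hMeval]
    rw [hfun, crossIntLeg_poly k (2*n+1) M (by omega)]
    rw [sum_range_odd_split (fun p => M.coeff p * cc (k+p)) n]
    have hodd : ∑ j ∈ Finset.range n, M.coeff (2*j+1) * cc (k+(2*j+1)) = 0 :=
      Finset.sum_eq_zero fun j _ => by rw [hMco_odd, zero_mul]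
    rw [hodd, add_zero]
    rcases Nat.even_or_odd k with hk2 | hk2
    · refine Finset.sum_eq_zero fun j _ => ?_
      obtain ⟨t, ht⟩ := hk2
      rw [hMco_even, show k + 2*j = 2*(t+j) by omega, cc_even, mul_zero]
    · obtain ⟨t, ht⟩ := hk2
      have htn : t < n := by omega
      have heq : ∑ j ∈ Finset.range (n+1), M.coeff (2*j) * cc (k+2*j)
          = ∑ j ∈ Finset.range (n+1), L.coeff j * rr (t+j) := by
        refine Finset.sum_congr rfl fun j _ => ?_
        rw [hMco_even, show k + 2*j = 2*(t+j)+1 by omega, cc_odd]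
      rw [heq, ← int_poly t (n+1) L (by omega), hLortho t htn]
  refine ⟨part1, ?_⟩
  intro mm hmm Q hQmonic hQortho hQmin
  have hmm' : mm = 2*n ∨ mm = 2*n+1 := hmm
  have hmm1 : 2*n ≤ mm := by omega
  have hmm2 : mm ≤ 2*n+1 := by omega
  have hMortho : OrthoLeg mm M := by
    intro k hk
    have hk' : k ≤ 2*n := by omega
    have hfun : (fun s : ℂ => s ^ k * M.eval s) = fun s => s ^ k * L.eval (s ^ 2) := by
      funext s; rw [hMeval]
    rw [hfun]; exact part1 k hk'
  have hQdeg : Q.natDegree ≤ 2*n := hMdeg ▸ hQmin M hMmonic hMortho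
  set D : ℂ[X] := Q - M with hDdef
  have hDdeg : D.natDegree ≤ 2*n := by
    refine le_trans (natDegree_sub_le _ _) (max_le hQdeg (le_of_eq hMdeg))
  have hDsum : ∀ k < mm, ∑ p ∈ Finset.range (2*n+1), D.coeff p * cc (k+p) = 0 := by
    intro k hk
    have e1 := crossIntLeg_poly k (2*n+1) Q (by omega)
    have e2 := crossIntLeg_poly k (2*n+1) M (by omega)
    rw [hQortho k hk] at e1
    rw [hMortho k hk] at e2
    have hsplit : ∑ p ∈ Finset.range (2*n+1), D.coeff p * cc (k+p)
        = (∑ p ∈ Finset.range (2*n+1), Q.coeff p * cc (k+p))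
          - ∑ p ∈ Finset.range (2*n+1), M.coeff p * cc (k+p) := by
      rw [← Finset.sum_sub_distrib]
      refine Finset.sum_congr rfl fun p _ => ?_
      rw [hDdef, coeff_sub, sub_mul]
    rw [hsplit, ← e1, ← e2, sub_zero]
  -- even/odd parts
  set A : ℂ[X] := ∑ j ∈ Finset.range (n+1), C (D.coeff (2*j)) * X^j with hAdef
  set B : ℂ[X] := ∑ j ∈ Finset.range n, C (D.coeff (2*j+1)) * X^j with hBdef
  have hAco : ∀ q, A.coeff q = if q < n+1 then D.coeff (2*q) else 0 := fun q =>
    coeff_sum_C_mul_X (n+1) (fun j => D.coeff (2*j)) q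
  have hBco : ∀ q, B.coeff q = if q < n then D.coeff (2*q+1) else 0 := fun q =>
    coeff_sum_C_mul_X n (fun j => D.coeff (2*j+1)) q
  have hAnd : A.natDegree < n+1 := by
    have : A.natDegree ≤ n := natDegree_le_iff_coeff_eq_zero.2 fun N hN => by
      rw [hAco, if_neg (by omega)]
    omega
  have hBnd : B.natDegree < n+1 := by
    have : B.natDegree ≤ n := natDegree_le_iff_coeff_eq_zero.2 fun N hN => by
      rw [hBco, if_neg (by omega)]
    omega
  have claimA : ∀ t < n, ∑ j ∈ Finset.range (n+1), D.coeff (2*j) * rr (t+j) = 0 := by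
    intro t ht
    have hd := hDsum (2*t+1) (by omega)
    rw [sum_range_odd_split (fun p => D.coeff p * cc (2*t+1+p)) n] at hd
    have hodd : ∑ j ∈ Finset.range n, D.coeff (2*j+1) * cc (2*t+1+(2*j+1)) = 0 :=
      Finset.sum_eq_zero fun j _ => by
        rw [show 2*t+1+(2*j+1) = 2*(t+j+1) by ring, cc_even, mul_zero]
    rw [hodd, add_zero] at hd
    rw [← hd]
    refine Finset.sum_congr rfl fun j _ => ?_
    rw [show 2*t+1+2*j = 2*(t+j)+1 by ring, cc_odd]
  have claimB : ∀ t < n, ∑ j ∈ Finset.range n, D.coeff (2*j+1) * rr (t+j) = 0 := by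
    intro t ht
    have hd := hDsum (2*t) (by omega)
    rw [sum_range_odd_split (fun p => D.coeff p * cc (2*t+p)) n] at hd
    have heven : ∑ j ∈ Finset.range (n+1), D.coeff (2*j) * cc (2*t+2*j) = 0 :=
      Finset.sum_eq_zero fun j _ => by
        rw [show 2*t+2*j = 2*(t+j) by ring, cc_even, mul_zero]
    rw [heven, zero_add] at hd
    rw [← hd]
    refine Finset.sum_congr rfl fun j _ => ?_
    rw [show 2*t+(2*j+1) = 2*(t+j)+1 by ring, cc_odd]
  -- B = 0
  have hBint : ∀ t < n, (∫ x in (-1:ℝ)..1, ((x:ℝ):ℂ)^t * B.eval ((x:ℝ):ℂ)) = 0 := by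
    intro t ht
    rw [int_poly t (n+1) B hBnd, Finset.sum_range_succ, hBco n, if_neg (by omega), zero_mul,
      add_zero]
    rw [← claimB t ht]
    refine Finset.sum_congr rfl fun j hj => ?_
    rw [hBco, if_pos (Finset.mem_range.1 hj)]
  have hBdegree : B.degree < (n : WithBot ℕ) := (degree_lt_iff_coeff_zero B n).2 fun m hm => by
    rw [hBco, if_neg (by exact_mod_cast not_lt.2 (by exact_mod_cast hm))]
  have hB0 : B = 0 := kernel n B hBdegree hBint
  -- A = (A.coeff n) • L
  set a : ℂ := A.coeff n with hadef
  set A' : ℂ[X] := A - C a * L with hA'def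
  have hLco : L.coeff n = 1 := by rw [← hLdeg]; exact hL.coeff_natDegree
  have hA'degree : A'.degree < (n : WithBot ℕ) := (degree_lt_iff_coeff_zero A' n).2 fun m hm => by
    have hm' : n ≤ m := by exact_mod_cast hm
    rw [hA'def, coeff_sub, coeff_C_mul]
    rcases eq_or_lt_of_le hm' with rfl | hlt
    · rw [hLco, mul_one, hadef, sub_self]
    · rw [hAco, if_neg (by omega), Polynomial.coeff_eq_zero_of_natDegree_lt (by omega),
        mul_zero, sub_zero]
  have hA'int : ∀ t < n, (∫ x in (-1:ℝ)..1, ((x:ℝ):ℂ)^t * A'.eval ((x:ℝ):ℂ)) = 0 := by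
    intro t ht
    have hAint : (∫ x in (-1:ℝ)..1, ((x:ℝ):ℂ)^t * A.eval ((x:ℝ):ℂ)) = 0 := by
      rw [int_poly t (n+1) A hAnd, ← claimA t ht]
      refine Finset.sum_congr rfl fun j hj => ?_
      rw [hAco, if_pos (Finset.mem_range.1 hj)]
    have hfun : (fun x : ℝ => ((x:ℝ):ℂ)^t * A'.eval ((x:ℝ):ℂ))
        = fun x : ℝ => ((x:ℝ):ℂ)^t * A.eval ((x:ℝ):ℂ)
          - a * (((x:ℝ):ℂ)^t * L.eval ((x:ℝ):ℂ)) := by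
      funext x
      rw [hA'def, eval_sub, eval_mul, eval_C]
      ring
    rw [hfun, intervalIntegral.integral_sub, hAint, intervalIntegral.integral_const_mul,
      hLortho t ht, mul_zero, sub_zero]
    · exact ((continuous_ofReal.pow t).mul (A.continuous.comp continuous_ofReal)).intervalIntegrable _ _
    · exact (continuous_const.mul
        ((continuous_ofReal.pow t).mul (L.continuous.comp continuous_ofReal))).intervalIntegrable _ _
  have hA'0 : A' = 0 := kernel n A' hA'degree hA'int
  have hAeq : A = C a * L := by rwa [hA'def, sub_eq_zero] at hA'0
  -- D = C a * M
  have hDco_even : ∀ j, D.coeff (2*j) = a * L.coeff j := by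
    intro j
    by_cases hj : j < n+1
    · have : A.coeff j = D.coeff (2*j) := by rw [hAco, if_pos hj]
      rw [← this, hAeq, coeff_C_mul]
    · rw [Polynomial.coeff_eq_zero_of_natDegree_lt (show D.natDegree < 2*j by omega),
        Polynomial.coeff_eq_zero_of_natDegree_lt (show L.natDegree < j by omega), mul_zero]
  have hDco_odd : ∀ j, D.coeff (2*j+1) = 0 := by
    intro j
    by_cases hj : j < n
    · have : B.coeff j = D.coeff (2*j+1) := by rw [hBco, if_pos hj]
      rw [← this, hB0, coeff_zero]
    · exact Polynomial.coeff_eq_zero_of_natDegree_lt (show D.natDegree < 2*j+1 by omega)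
  have hDM : D = C a * M := by
    ext p
    rw [coeff_C_mul]
    rcases Nat.even_or_odd p with ⟨j, hj⟩ | ⟨j, hj⟩
    · rw [show p = 2*j by omega, hDco_even, hMco_even]
    · rw [show p = 2*j+1 by omega, hDco_odd, hMco_odd, mul_zero]
  have hQM : Q = C (a+1) * M := by
    have : Q = D + M := by rw [hDdef]; ring
    rw [this, hDM, C_add, C_1]
    ring
  have hlead : (a+1) * M.leadingCoeff = 1 := by
    rw [← leadingCoeff_C (a+1), ← leadingCoeff_mul, ← hQM]
    exact hQmonic
  rw [hMmonic.leadingCoeff, mul_one] at hlead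
  have ha0 : a = 0 := by linear_combination hlead
  rw [hQM, ha0]
  simp [hMdef]
end

section
/- Let a, b > 0 and let g(z) := g_Δ(z; ∞) be the Green function of C̄ \ Δ with pole at infinity for the cross Δ = [-a,a] ∪ [-ib,ib]. Let Φ_0(z) := (2/(a^2+b^2))(z^2 + (b^2-a^2)/2 + w(z)) with w the standard branch. Then |Φ_0(z)| = exp(2 g(z; ∞)) for all z ∈ C \ Δ; in particular |Φ_0(z)| > 1 off Δ and |Φ_0| = 1 on Δ. -/
open Complex Set Asymptotics Bornology Filter Topology

/-- Maximum principle for (locally) harmonic functions on `ℂ` tending to `-∞` at infinity. -/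
lemma stmt13_maxPrinciple (h : ℂ → ℝ) (hc : Continuous h)
    (hloc : ∀ z : ℂ, 0 < h z → ∃ (V : Set ℂ) (f : ℂ → ℂ), IsOpen V ∧ z ∈ V ∧
      DifferentiableOn ℂ f V ∧ ∀ x ∈ V, h x = (f x).re)
    (htop : Tendsto h (cobounded ℂ) atBot) : ∀ z, h z ≤ 0 := by
  by_contra hcon
  push_neg at hcon
  obtain ⟨z₀, hz₀⟩ := hcon
  have hev : ∀ᶠ z in cobounded ℂ, h z ≤ h z₀ - 1 := htop.eventually (eventually_le_atBot _)
  obtain ⟨s, hs, hsP⟩ := hev.exists_mem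
  have hsb : Bornology.IsBounded sᶜ := by
    rw [Bornology.isBounded_def, compl_compl]; exact hs
  have hSb : Bornology.IsBounded {z : ℂ | h z₀ ≤ h z} := by
    apply hsb.subset
    intro z hz
    simp only [mem_compl_iff, mem_setOf_eq] at hz ⊢
    intro hzs
    have := hsP z hzs
    linarith
  have hSc : IsClosed {z : ℂ | h z₀ ≤ h z} := isClosed_le continuous_const hc
  have hScomp : IsCompact {z : ℂ | h z₀ ≤ h z} := Metric.isCompact_of_isClosed_isBounded hSc hSb
  obtain ⟨z₁, hz₁S, hmax⟩ := hScomp.exists_isMaxOn ⟨z₀, by simp⟩ hc.continuousOn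
  set M := h z₁ with hM
  have hMpos : 0 < M := lt_of_lt_of_le hz₀ hz₁S
  have hglobal : ∀ z, h z ≤ M := by
    intro z
    by_cases hz : h z₀ ≤ h z
    · exact hmax hz
    · have h0 : h z₀ ≤ M := hz₁S
      push_neg at hz; linarith
  have hAopen : IsOpen {z : ℂ | h z = M} := by
    rw [isOpen_iff_mem_nhds]
    intro z hz
    simp only [mem_setOf_eq] at hz
    obtain ⟨V, f, hVo, hzV, hfd, hfre⟩ := hloc z (hz ▸ hMpos)
    have hVn : V ∈ 𝓝 z := hVo.mem_nhds hzV
    have hd : ∀ᶠ x in 𝓝 z, DifferentiableAt ℂ (fun y => Complex.exp (f y)) x := by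
      filter_upwards [hVo.eventually_mem hzV] with x hx
      exact ((hfd.differentiableAt (hVo.mem_nhds hx)).cexp)
    have hlm : IsLocalMax (norm ∘ fun y => Complex.exp (f y)) z := by
      filter_upwards [hVn] with x hx
      simp only [Function.comp, Complex.norm_exp]
      rw [← hfre x hx, ← hfre z hzV, hz]
      exact Real.exp_le_exp.mpr ((hglobal x).trans_eq rfl)
    have := Complex.norm_eventually_eq_of_isLocalMax hd hlm
    filter_upwards [this, hVn] with x hx hxV
    simp only [Complex.norm_exp, ← hfre x hxV, ← hfre z hzV, hz] at hx
    exact Real.exp_injective hx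
  have hAclosed : IsClosed {z : ℂ | h z = M} := isClosed_eq hc continuous_const
  have hAuniv : {z : ℂ | h z = M} = univ :=
    (IsClopen.eq_univ ⟨hAclosed, hAopen⟩ ⟨z₁, rfl⟩)
  obtain ⟨z₂, hz₂⟩ := (htop.eventually (eventually_le_atBot (M - 1))).exists
  have : h z₂ = M := by rw [← mem_setOf_eq (p := fun z => h z = M), hAuniv]; trivial
  linarith

set_option maxHeartbeats 1000000 in
/-- Let `g` be the Green function of the complement of the cross
`Δ = [-a,a] ∪ [-ib,ib]` with pole at infinity (harmonic — i.e. locally the real part of a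
holomorphic function — and positive off `Δ`, continuous, vanishing on `Δ`, and
`g(z) = log|z| + O(1)` at infinity), and let
`Φ₀(z) = (2/(a²+b²))(z² + (b²-a²)/2 + w(z))`. Then `|Φ₀(z)| = exp(2 g(z))` off `Δ`;
in particular `|Φ₀| > 1` off `Δ` and `|Φ₀| = 1` on `Δ`. -/
theorem stmt13 (a b : ℝ) (ha : 0 < a) (hb : 0 < b)
    (Δ : Set ℂ) (hΔ : Δ = segment ℝ (-(a : ℂ)) (a : ℂ) ∪ segment ℝ (-((b : ℂ) * I)) ((b : ℂ) * I))
    (w : ℂ → ℂ)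
    (hw_sq : ∀ z : ℂ, (w z) ^ 2 = (z ^ 2 - (a : ℂ) ^ 2) * (z ^ 2 + (b : ℂ) ^ 2))
    (hw_holo : DifferentiableOn ℂ w Δᶜ)
    (hw_norm : (fun z => w z - z ^ 2) =O[cobounded ℂ] (fun z => z))
    (g : ℂ → ℝ) (hg_cont : Continuous g)
    (hg_harm : ∀ z ∈ Δᶜ, ∃ (V : Set ℂ) (f : ℂ → ℂ), IsOpen V ∧ z ∈ V ∧ V ⊆ Δᶜ ∧
      DifferentiableOn ℂ f V ∧ ∀ x ∈ V, g x = (f x).re)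
    (hg_zero : ∀ s ∈ Δ, g s = 0)
    (hg_pos : ∀ z ∉ Δ, 0 < g z)
    (hg_log : (fun z => g z - Real.log ‖z‖) =O[cobounded ℂ] (fun _ => (1 : ℝ))) :
    (∀ z ∉ Δ, ‖(2 / ((a : ℂ) ^ 2 + (b : ℂ) ^ 2)) *
        (z ^ 2 + ((b : ℂ) ^ 2 - (a : ℂ) ^ 2) / 2 + w z)‖ = Real.exp (2 * g z)) ∧
    (∀ z ∉ Δ, 1 < ‖(2 / ((a : ℂ) ^ 2 + (b : ℂ) ^ 2)) *
        (z ^ 2 + ((b : ℂ) ^ 2 - (a : ℂ) ^ 2) / 2 + w z)‖) ∧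
    (∀ s ∈ Δ, ‖(2 / ((a : ℂ) ^ 2 + (b : ℂ) ^ 2)) *
        (s ^ 2 + ((b : ℂ) ^ 2 - (a : ℂ) ^ 2) / 2 + w s)‖ = 1) := by
  set c : ℝ := (b^2-a^2)/2 with hc
  set K : ℝ := (a^2+b^2)/2 with hK
  have hKpos : 0 < K := by rw [hK]; positivity
  set Cr : ℝ := 2/(a^2+b^2) with hCr
  have hCrpos : 0 < Cr := by rw [hCr]; positivity
  have hCrK : Cr * K = 1 := by
    rw [hCr, hK]; field_simp
  set φ : ℂ → ℂ := fun z => z^2 + (c:ℂ) + w z with hφ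
  set Af : ℂ → ℝ := fun z => ‖φ z‖ with hAf
  set L : ℂ → ℝ := fun z => Real.log (Cr * Af z) with hL
  -- basic algebraic facts
  have hfact : ∀ z : ℂ, φ z * (z^2 + (c:ℂ) - w z) = ((K:ℝ):ℂ)^2 := by
    intro z
    have h1 : φ z * (z^2 + (c:ℂ) - w z) = (z^2+(c:ℂ))^2 - (w z)^2 := by rw [hφ]; ring
    rw [h1, hw_sq z, hc, hK]; push_cast; ring
  have hφne : ∀ z, φ z ≠ 0 := by
    intro z hz
    have h0 := hfact z
    rw [hz, zero_mul] at h0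
    have h1 : ((K:ℝ):ℂ) = 0 := pow_eq_zero_iff (n := 2) (by norm_num) |>.mp h0.symm
    simp only [Complex.ofReal_eq_zero] at h1
    linarith
  have hAfpos : ∀ z, 0 < Af z := fun z => norm_pos_iff.mpr (hφne z)
  have hwsq' : ∀ z : ℂ, (w z)^2 = (z^2 + (c:ℂ))^2 - ((K:ℝ):ℂ)^2 := by
    intro z
    rw [hw_sq z, hc, hK]; push_cast; ring
  -- boundary parametrization
  have hparam : ∀ s ∈ Δ, ∃ u : ℝ, s ^ 2 = (u : ℂ) ∧ (u + c)^2 ≤ K^2 := by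
    intro s hs
    rw [hΔ] at hs
    rcases hs with hs | hs
    · rw [segment_eq_image] at hs
      obtain ⟨θ, hθ, hsθ⟩ := hs
      obtain ⟨h0, h1⟩ := hθ
      have hsval : s = (((1-θ)*(-a)+θ*a : ℝ) : ℂ) := by
        rw [← hsθ]; simp only [Complex.real_smul]; push_cast; ring
      refine ⟨((1-θ)*(-a) + θ*a)^2, ?_, ?_⟩
      · rw [hsval]; norm_cast
      · have h2 : ((1-θ)*(-a)+θ*a)^2 ≤ a^2 := by
          nlinarith [mul_nonneg (mul_nonneg h0 (by linarith : (0:ℝ) ≤ 1-θ)) (sq_nonneg a)]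
        have h3 := sq_nonneg ((1-θ)*(-a)+θ*a)
        rw [hc, hK]; nlinarith
    · rw [segment_eq_image] at hs
      obtain ⟨θ, hθ, hsθ⟩ := hs
      obtain ⟨h0, h1⟩ := hθ
      have hsval : s = (((1-θ)*(-b)+θ*b : ℝ) : ℂ) * I := by
        rw [← hsθ]; simp only [Complex.real_smul]; push_cast; ring
      refine ⟨-(((1-θ)*(-b) + θ*b)^2), ?_, ?_⟩
      · rw [hsval, mul_pow, I_sq]; push_cast; ring
      · have h2 : ((1-θ)*(-b)+θ*b)^2 ≤ b^2 := by
          nlinarith [mul_nonneg (mul_nonneg h0 (by linarith : (0:ℝ) ≤ 1-θ)) (sq_nonneg b)]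
        have h3 := sq_nonneg ((1-θ)*(-b)+θ*b)
        rw [hc, hK]; nlinarith
  -- boundary modulus
  have hbd : ∀ (s : ℂ) (u : ℝ), s^2 = (u:ℂ) → (u + c)^2 ≤ K^2 → Af s = K := by
    intro s u hsu hu
    set t : ℝ := Real.sqrt (K^2 - (u+c)^2) with htdef
    have ht2 : t^2 = K^2 - (u+c)^2 := Real.sq_sqrt (by linarith)
    have hws : (w s)^2 = (t*I)^2 := by
      rw [hwsq' s, hsu, mul_pow, I_sq]
      push_cast
      rw [show ((t:ℂ))^2 = ((t^2 : ℝ) : ℂ) by push_cast; ring]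
      rw [ht2]; push_cast; ring
    have hz0 : (w s - t*I) * (w s + t*I) = 0 := by
      calc (w s - t*I) * (w s + t*I) = (w s)^2 - (t*I)^2 := by ring
        _ = 0 := by rw [hws]; ring
    rcases mul_eq_zero.mp hz0 with h | h
    · have hw : w s = (t:ℂ)*I := sub_eq_zero.mp h
      have h1 : φ s = ((u+c : ℝ):ℂ) + t*I := by rw [hφ]; simp only []; rw [hsu, hw]; push_cast; ring
      rw [hAf]; simp only []
      rw [h1, Complex.norm_add_mul_I]
      rw [show (u+c)^2 + t^2 = K^2 by linarith]
      exact Real.sqrt_sq hKpos.le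
    · have hw : w s = -((t:ℂ)*I) := eq_neg_of_add_eq_zero_left h
      have h1 : φ s = ((u+c : ℝ):ℂ) + ((-t : ℝ):ℂ)*I := by
        rw [hφ]; simp only []; rw [hsu, hw]; push_cast; ring
      rw [hAf]; simp only []
      rw [h1, Complex.norm_add_mul_I]
      rw [show (u+c)^2 + (-t)^2 = K^2 by linarith [neg_sq t]]
      exact Real.sqrt_sq hKpos.le
  have hAfΔ : ∀ s ∈ Δ, Af s = K := by
    intro s hs
    obtain ⟨u, h1, h2⟩ := hparam s hs
    exact hbd s u h1 h2
  -- the goal expression equals Cr * Af z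
  have habs : ∀ z : ℂ, ‖(2 / ((a:ℂ)^2 + (b:ℂ)^2)) *
      (z^2 + ((b:ℂ)^2-(a:ℂ)^2)/2 + w z)‖ = Cr * Af z := by
    intro z
    have h1 : z^2 + ((b:ℂ)^2-(a:ℂ)^2)/2 + w z = φ z := by rw [hφ]; simp only []; push_cast [hc]; ring
    have h2 : (2 / ((a:ℂ)^2 + (b:ℂ)^2)) = ((Cr:ℝ):ℂ) := by rw [hCr]; push_cast; ring
    rw [h1, h2, norm_mul, Complex.norm_real, Real.norm_eq_abs, abs_of_pos hCrpos]
  -- Δ is closed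
  have hΔclosed : IsClosed Δ := by
    rw [hΔ]
    have hseg : ∀ (x y : ℂ), IsClosed (segment ℝ x y) := by
      intro x y
      rw [segment_eq_image]
      exact (isCompact_Icc.image (by fun_prop)).isClosed
    exact (hseg _ _).union (hseg _ _)
  have hΔopen : IsOpen Δᶜ := hΔclosed.isOpen_compl
  -- continuity of Af
  -- auxiliary continuous majorant for the squeeze at boundary points
  set Sf : ℂ → ℝ := fun z => 2*((‖z^2+(c:ℂ)‖)^2
    + ‖(z^2+(c:ℂ))^2 - ((K:ℝ):ℂ)^2‖) with hSf
  have hSfcont : Continuous Sf := by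
    apply Continuous.mul continuous_const
    apply Continuous.add
    · exact (continuous_norm.comp ((continuous_pow 2).add continuous_const)).pow 2
    · exact continuous_norm.comp
        ((((continuous_pow 2).add continuous_const).pow 2).sub continuous_const)
  have hsumprod : ∀ z : ℂ, (Af z)^2 + (‖z^2+(c:ℂ) - w z‖)^2 = Sf z ∧
      (Af z)^2 * (‖z^2+(c:ℂ) - w z‖)^2 = K^4 := by
    intro z
    constructor
    · have hpar : ∀ p v : ℂ, (‖p+v‖)^2 + (‖p-v‖)^2
          = 2*((‖p‖)^2 + (‖v‖)^2) := by
        intro p v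
        simp only [Complex.sq_norm, Complex.normSq_apply, Complex.add_re, Complex.add_im,
          Complex.sub_re, Complex.sub_im]
        ring
      have h1 : (‖w z‖)^2 = ‖(z^2+(c:ℂ))^2 - ((K:ℝ):ℂ)^2‖ := by
        rw [← hwsq' z, ← norm_pow]
      have h2 := hpar (z^2+(c:ℂ)) (w z)
      rw [hAf]; simp only []
      rw [hφ]; simp only []
      rw [hSf]; simp only []
      rw [← h1]
      linarith [h2]
    · have h1 := congrArg norm (hfact z)
      rw [norm_mul] at h1
      have h2 : ‖((K:ℝ):ℂ)^2‖ = K^2 := by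
        rw [norm_pow, Complex.norm_real, Real.norm_eq_abs, abs_of_pos hKpos]
      rw [h2] at h1
      rw [hAf]; simp only []
      nlinarith [h1]
  have hS2K : ∀ z : ℂ, 2*K^2 ≤ Sf z := by
    intro z
    obtain ⟨h1, h2⟩ := hsumprod z
    nlinarith [sq_nonneg ((Af z)^2 - (‖z^2+(c:ℂ) - w z‖)^2)]
  have hXbound : ∀ z : ℂ, |(Af z)^2 - K^2| ≤ Real.sqrt (Sf z * (Sf z - 2*K^2)) := by
    intro z
    obtain ⟨h1, h2⟩ := hsumprod z
    have hXnn : (0:ℝ) ≤ (Af z)^2 := sq_nonneg _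
    have hYnn : (0:ℝ) ≤ (‖z^2+(c:ℂ) - w z‖)^2 := sq_nonneg _
    have h3 : ((Af z)^2 - K^2)^2 ≤ Sf z * (Sf z - 2*K^2) := by nlinarith [hS2K z]
    calc |(Af z)^2 - K^2| = Real.sqrt (((Af z)^2 - K^2)^2) := (Real.sqrt_sq_eq_abs _).symm
      _ ≤ Real.sqrt (Sf z * (Sf z - 2*K^2)) := Real.sqrt_le_sqrt h3
  have hAfcont : Continuous Af := by
    rw [continuous_iff_continuousAt]
    intro z
    by_cases hz : z ∈ Δ
    · -- boundary point : squeeze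
      obtain ⟨u, hsu, hu⟩ := hparam z hz
      have hSfz : Sf z = 2*K^2 := by
        have hp : z^2 + (c:ℂ) = ((u+c:ℝ):ℂ) := by rw [hsu]; push_cast; ring
        rw [hSf]; simp only []
        rw [hp]
        rw [show ((u+c:ℝ):ℂ)^2 - ((K:ℝ):ℂ)^2 = (((u+c)^2 - K^2 : ℝ):ℂ) by push_cast; ring]
        rw [Complex.norm_real, Complex.norm_real, Real.norm_eq_abs, Real.norm_eq_abs]
        rw [_root_.sq_abs, abs_of_nonpos (by linarith : (u+c)^2 - K^2 ≤ 0)]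
        ring
      have hGlim : Tendsto (fun y => Real.sqrt (Sf y * (Sf y - 2*K^2))) (𝓝 z) (𝓝 0) := by
        have hGc : Continuous (fun y => Real.sqrt (Sf y * (Sf y - 2*K^2))) :=
          Real.continuous_sqrt.comp (hSfcont.mul (hSfcont.sub continuous_const))
        have := hGc.continuousAt (x := z)
        rw [ContinuousAt, hSfz] at this
        simpa using this
      have hXlim : Tendsto (fun y => (Af y)^2) (𝓝 z) (𝓝 (K^2)) := by
        have h0 : Tendsto (fun y => (Af y)^2 - K^2) (𝓝 z) (𝓝 0) := by
          apply squeeze_zero_norm (fun y => ?_) hGlim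
          exact hXbound y
        have := h0.add (tendsto_const_nhds (x := K^2))
        simpa using this
      have hsq : Tendsto (fun y => Real.sqrt ((Af y)^2)) (𝓝 z) (𝓝 (Real.sqrt (K^2))) :=
        (Real.continuous_sqrt.tendsto (K^2)).comp hXlim
      have heq : (fun y => Real.sqrt ((Af y)^2)) = Af := by
        funext y
        exact Real.sqrt_sq (norm_nonneg _)
      rw [heq] at hsq
      have hKval : Real.sqrt (K^2) = K := Real.sqrt_sq hKpos.le
      rw [hKval] at hsq
      have : Af z = K := hbd z u hsu hu
      rw [ContinuousAt, this]
      exact hsq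
    · -- interior point
      have hwz : DifferentiableAt ℂ w z := hw_holo.differentiableAt (hΔopen.mem_nhds hz)
      have hφat : ContinuousAt φ z := by
        have : DifferentiableAt ℂ φ z := by
          apply DifferentiableAt.add
          · exact (differentiableAt_pow 2).add_const _
          · exact hwz
        exact this.continuousAt
      exact continuous_norm.continuousAt.comp hφat
  have hLcont : Continuous L :=
    (continuous_const.mul hAfcont).log (fun z => ne_of_gt (mul_pos hCrpos (hAfpos z)))
  have hLΔ : ∀ s ∈ Δ, L s = 0 := by
    intro s hs
    rw [hL]; simp only []
    rw [hAfΔ s hs, hCrK, Real.log_one]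
  -- asymptotics
  have habstop : Tendsto (fun z : ℂ => ‖z‖) (cobounded ℂ) atTop := by
    exact (tendsto_norm_cobounded_atTop (E := ℂ)).congr (fun z => rfl)
  have hz1 : ∀ᶠ z : ℂ in cobounded ℂ, 1 ≤ ‖z‖ :=
    habstop.eventually_ge_atTop 1
  obtain ⟨C, hCev⟩ : ∃ C : ℝ, ∀ᶠ z : ℂ in cobounded ℂ, |g z - Real.log ‖z‖| ≤ C := by
    rw [isBigO_iff] at hg_log
    obtain ⟨C, hC⟩ := hg_log
    refine ⟨C, ?_⟩
    filter_upwards [hC] with z hz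
    simpa using hz
  have hgtop : Tendsto g (cobounded ℂ) atTop := by
    apply tendsto_atTop_mono' (cobounded ℂ)
      (f₁ := fun z => Real.log ‖z‖ - C)
    · filter_upwards [hCev] with z hz
      have := abs_le.mp hz
      linarith [this.1]
    · have h1 : Tendsto (fun z : ℂ => Real.log ‖z‖) (cobounded ℂ) atTop :=
        Real.tendsto_log_atTop.comp habstop
      exact tendsto_atTop_add_const_right _ (-C) h1 |>.congr (fun z => by ring)
  -- asymptotic boundedness of 2g - L
  have hMbd : ∃ M : ℝ, ∀ᶠ z in cobounded ℂ, |2 * g z - L z| ≤ M := by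
    -- φ z / z² → 2
    have hconst : (fun _ : ℂ => ((c:ℝ):ℂ)) =O[cobounded ℂ] fun z => z := by
      rw [isBigO_iff]
      refine ⟨‖((c:ℝ):ℂ)‖, ?_⟩
      filter_upwards [hz1] with z hz
      exact le_mul_of_one_le_right (norm_nonneg _) hz
    have hO : (fun z => φ z - 2*z^2) =O[cobounded ℂ] fun z => z := by
      have heq : (fun z => φ z - 2*z^2) = fun z => (w z - z^2) + ((c:ℝ):ℂ) := by
        funext z; rw [hφ]; simp only []; ring
      rw [heq]
      exact hw_norm.add hconst
    have hlt : (fun z : ℂ => z) =o[cobounded ℂ] fun z => z^2 := by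
      rw [isLittleO_iff]
      intro ε hε
      filter_upwards [habstop.eventually_ge_atTop (1/ε), hz1] with z hz h1
      simp only [norm_pow]
      have h2 : 0 < ‖z‖ := by linarith
      rw [pow_two]
      rw [div_le_iff₀ hε] at hz
      nlinarith [norm_nonneg z]
    have hdiv : Tendsto (fun z => (φ z - 2*z^2)/z^2) (cobounded ℂ) (𝓝 0) :=
      (hO.trans_isLittleO hlt).tendsto_div_nhds_zero
    have hratio : Tendsto (fun z => φ z / z^2) (cobounded ℂ) (𝓝 2) := by
      have h1 := hdiv.add (tendsto_const_nhds (x := (2:ℂ)))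
      rw [zero_add] at h1
      apply h1.congr'
      filter_upwards [hz1] with z hz
      have hz0 : z ≠ 0 := by
        intro h; rw [h] at hz; simp at hz; linarith
      field_simp; ring
    have habs2 : Tendsto (fun z => Af z / (‖z‖)^2) (cobounded ℂ) (𝓝 2) := by
      have h1 := (continuous_norm.tendsto 2).comp hratio
      have h2 : ‖(2:ℂ)‖ = 2 := by norm_num
      rw [h2] at h1
      apply h1.congr
      intro z
      simp only [Function.comp_apply, norm_div, norm_pow]; rfl
    have hlog2 : Tendsto (fun z => Real.log (Af z) - 2*Real.log ‖z‖)
        (cobounded ℂ) (𝓝 (Real.log 2)) := by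
      have h1 := (Real.continuousAt_log (by norm_num : (2:ℝ) ≠ 0)).tendsto.comp habs2
      apply h1.congr'
      filter_upwards [hz1] with z hz
      have hz0 : (0:ℝ) < ‖z‖ := by linarith
      simp only [Function.comp_apply]
      rw [Real.log_div (ne_of_gt (hAfpos z)) (by positivity), Real.log_pow]
      push_cast
      ring
    have hev2 : ∀ᶠ z : ℂ in cobounded ℂ,
        |Real.log (Af z) - 2*Real.log ‖z‖ - Real.log 2| ≤ 1 := by
      have := Metric.tendsto_nhds.mp hlog2 1 one_pos
      filter_upwards [this] with z hz
      rw [Real.dist_eq] at hz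
      linarith [le_of_lt hz]
    refine ⟨2*C + |Real.log 2| + 1 + |Real.log Cr|, ?_⟩
    filter_upwards [hCev, hev2] with z h3 h4
    have hLz : L z = Real.log Cr + Real.log (Af z) := by
      rw [hL]; simp only []
      exact Real.log_mul (ne_of_gt hCrpos) (ne_of_gt (hAfpos z))
    obtain ⟨h3a, h3b⟩ := abs_le.mp h3
    obtain ⟨h4a, h4b⟩ := abs_le.mp h4
    have hlc := abs_le.mp (le_refl |Real.log Cr|)
    have hl2 := abs_le.mp (le_refl |Real.log 2|)
    rw [hLz, abs_le]
    constructor <;> nlinarith [neg_abs_le (Real.log Cr), le_abs_self (Real.log Cr),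
      neg_abs_le (Real.log 2), le_abs_self (Real.log 2)]
  -- the key identity via the maximum principle
  have hφdiff : DifferentiableOn ℂ φ Δᶜ := by
    intro x hx
    exact (((differentiableAt_pow 2).add_const _).differentiableWithinAt).add (hw_holo x hx)
  have hre : ∀ (r : ℝ) (ζ : ℂ), ((r:ℂ)*ζ).re = r * ζ.re := by
    intro r ζ
    simp [Complex.mul_re]
  have hkey : ∀ z ∉ Δ, 2 * g z = L z := by
    obtain ⟨M, hM⟩ := hMbd
    have main : ∀ σ : ℝ, (σ = 1 ∨ σ = -1) → ∀ ε : ℝ, 0 < ε → ∀ z : ℂ,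
        σ*(2*g z - L z) - ε*g z ≤ 0 := by
      intro σ hσ ε hε
      apply stmt13_maxPrinciple (h := fun z => σ*(2*g z - L z) - ε*g z)
      · exact (continuous_const.mul ((continuous_const.mul hg_cont).sub hLcont)).sub
          (continuous_const.mul hg_cont)
      · intro z hz
        have hzΔ : z ∉ Δ := by
          intro hzin
          rw [hg_zero z hzin, hLΔ z hzin] at hz
          norm_num at hz
        obtain ⟨V, f, hVo, hzV, hVΔ, hfd, hfre⟩ := hg_harm z hzΔ
        set ψ : ℂ → ℂ := fun x => ((Cr:ℝ):ℂ) * φ x with hψ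
        have hCrne : ((Cr:ℝ):ℂ) ≠ 0 := by
          simp only [ne_eq, Complex.ofReal_eq_zero]
          exact ne_of_gt hCrpos
        have hψne : ∀ x, ψ x ≠ 0 := fun x => mul_ne_zero hCrne (hφne x)
        have hψabs : ∀ x, ‖ψ x‖ = Cr * Af x := by
          intro x
          rw [hψ]; simp only []
          rw [norm_mul, Complex.norm_real, Real.norm_eq_abs, abs_of_pos hCrpos]
        set d : ℂ := ((‖ψ z‖ : ℝ):ℂ) / ψ z with hd
        have hdabs : ‖d‖ = 1 := by
          rw [hd, norm_div, Complex.norm_real, Real.norm_eq_abs,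
            _root_.abs_of_nonneg (norm_nonneg (ψ z))]
          rw [div_self (norm_ne_zero_iff.mpr (hψne z))]
        have hcontψ : ContinuousOn (fun x => d * ψ x) V := by
          apply continuousOn_const.mul
          exact continuousOn_const.mul ((hφdiff.continuousOn).mono hVΔ)
        set V' : Set ℂ := V ∩ (fun x => d * ψ x) ⁻¹' Complex.slitPlane with hV'
        have hV'open : IsOpen V' := hcontψ.isOpen_inter_preimage hVo Complex.isOpen_slitPlane
        have hzV' : z ∈ V' := by
          refine ⟨hzV, ?_⟩
          show d * ψ z ∈ Complex.slitPlane
          rw [hd, div_mul_cancel₀ _ (hψne z)]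
          apply Complex.ofReal_mem_slitPlane.mpr
          rw [hψabs z]
          exact mul_pos hCrpos (hAfpos z)
        refine ⟨V', fun x => ((2*σ - ε : ℝ):ℂ) * f x - ((σ:ℝ):ℂ) * Complex.log (d * ψ x),
          hV'open, hzV', ?_, ?_⟩
        · apply DifferentiableOn.sub
          · exact (hfd.mono inter_subset_left).const_mul _
          · apply DifferentiableOn.const_mul
            apply DifferentiableOn.clog
            · apply DifferentiableOn.const_mul
              apply DifferentiableOn.const_mul
              exact hφdiff.mono (inter_subset_left.trans hVΔ)
            · intro x hx
              exact hx.2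
        · intro x hx
          have h1 : g x = (f x).re := hfre x hx.1
          have h2 : (Complex.log (d * ψ x)).re = Real.log (Cr * Af x) := by
            rw [Complex.log_re, norm_mul, hdabs, one_mul, hψabs]
          rw [Complex.sub_re, hre, hre, h2, ← h1]
          rw [hL]; simp only []
          ring
      · have hev : ∀ᶠ z : ℂ in cobounded ℂ,
            σ*(2*g z - L z) - ε*g z ≤ M - ε*g z := by
          filter_upwards [hM] with z hz
          have hσ1 : |σ| = 1 := by rcases hσ with h|h <;> rw [h] <;> norm_num
          have : σ*(2*g z - L z) ≤ M := by
            have h3 : σ*(2*g z - L z) ≤ |σ*(2*g z - L z)| := le_abs_self _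
            rw [abs_mul, hσ1, one_mul] at h3
            linarith
          linarith
        have hbot : Tendsto (fun z : ℂ => M - ε*g z) (cobounded ℂ) atBot := by
          have h1 : Tendsto (fun z : ℂ => ε * g z) (cobounded ℂ) atTop :=
            hgtop.const_mul_atTop hε
          have h2 : Tendsto (fun z : ℂ => -(ε * g z)) (cobounded ℂ) atBot :=
            tendsto_neg_atTop_atBot.comp h1
          exact (tendsto_atBot_add_const_left (cobounded ℂ) M h2).congr (fun z => by ring)
        exact tendsto_atBot_mono' (cobounded ℂ) hev hbot
    intro z hz
    have hgz := hg_pos z hz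
    have h1 : ∀ ε : ℝ, 0 < ε → (2*g z - L z) ≤ ε * g z := by
      intro ε hε; have := main 1 (Or.inl rfl) ε hε z; linarith
    have h2 : ∀ ε : ℝ, 0 < ε → -(2*g z - L z) ≤ ε * g z := by
      intro ε hε; have := main (-1) (Or.inr rfl) ε hε z; linarith
    by_contra hne
    rcases lt_or_gt_of_ne hne with hlt | hgt
    · have hεp : 0 < (L z - 2*g z)/(2*g z) := by
        apply div_pos (by linarith) (by linarith)
      have h3 := h2 _ hεp
      have h4 : ((L z - 2*g z)/(2*g z)) * g z = (L z - 2*g z)/2 := by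
        field_simp
      rw [h4] at h3
      linarith
    · have hεp : 0 < (2*g z - L z)/(2*g z) := by
        apply div_pos (by linarith) (by linarith)
      have h3 := h1 _ hεp
      have h4 : ((2*g z - L z)/(2*g z)) * g z = (2*g z - L z)/2 := by
        field_simp
      rw [h4] at h3
      linarith
  have hval : ∀ z ∉ Δ, Cr * Af z = Real.exp (2 * g z) := by
    intro z hz
    rw [hkey z hz]
    simp only [hL]
    exact (Real.exp_log (mul_pos hCrpos (hAfpos z))).symm
  refine ⟨?_, ?_, ?_⟩
  · intro z hz
    rw [habs z, hval z hz]
  · intro z hz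
    rw [habs z, hval z hz, Real.one_lt_exp_iff]
    have := hg_pos z hz
    linarith
  · intro s hs
    rw [habs s, hAfΔ s hs, hCrK]
end
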